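/- arXiv:2003.01636 — 6 statements merged into one kernel-verified Lean document; each statement's English description precedes it below -/
import Mathlib

section
/- For every ε > 0 there exists δ = ε^⌊1/ε⌋ > 0 such that for any 1-Lipschitz function f : [a,b] → ℝ there exists a subinterval [c,d] ⊆ [a,b] with d − c ≥ δ(b − a) such that f is ε-linear on [c,d], i.e. |f(x) − (f(c) + s_f(c,d)(x − c))| ≤ ε(d − c) for all x ∈ [c,d], where s_f(c,d) = (f(d) − f(c))/(d − c). -/
/-!
If `f` is not `ε`-linear on `[c, d]`, some point `x` lies more than `ε (d - c)` off the chord.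
Of the chords over `[c, x]` and `[x, d]`, one has a slope that is further from zero than that
of `[c, d]` by more than `ε`, and since `f` is 1-Lipschitz this chord is longer than `ε (d - c)`.
Absolute slopes of chords lie in `[0, 1]`, so after at most `⌊1 / ε⌋` such steps we reach an
`ε`-linear interval, of length at least `ε ^ ⌊1 / ε⌋ (b - a)`.
-/

open Set

def IsEpsLinearOn (ε : ℝ) (f : ℝ → ℝ) (c d : ℝ) : Prop :=
  ∀ x ∈ Icc c d, |f x - (f c + slope f c d * (x - c))| ≤ ε * (d - c)

theorem LipschitzOnWith.abs_slope_le {f : ℝ → ℝ} {K : NNReal} {s : Set ℝ}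
    (hf : LipschitzOnWith K f s) {u v : ℝ} (hu : u ∈ s) (hv : v ∈ s) :
    |slope f u v| ≤ K := by
  rcases eq_or_ne u v with rfl | huv
  · simp
  have hvu : 0 < |v - u| := abs_pos.2 (sub_ne_zero.2 huv.symm)
  rw [slope_def_field, abs_div, div_le_iff₀ hvu]
  simpa only [Real.dist_eq] using hf.dist_le_mul v hv u hu

theorem abs_slope_add_le_of_deviation {ε : ℝ} {f : ℝ → ℝ} {c d u v : ℝ}
    (hf : LipschitzOnWith 1 f (Icc c d)) (hu : u ∈ Icc c d) (hv : v ∈ Icc c d) (huv : u < v)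
    (hsign : 0 ≤ slope f c d * (slope f u v - slope f c d))
    (hdev : ε * (d - c) < |slope f u v - slope f c d| * (v - u)) :
    ε * (d - c) ≤ v - u ∧ |slope f c d| + ε ≤ |slope f u v| := by
  set s := slope f c d
  set s' := slope f u v
  have hadd : |s'| = |s| + |s' - s| := by
    rw [← (abs_add_eq_add_abs_iff _ _).2 (mul_nonneg_iff.1 hsign), add_sub_cancel]
  have hs' : |s'| ≤ 1 := by exact_mod_cast hf.abs_slope_le hu hv
  have hgain_le_one : |s' - s| ≤ 1 := by linarith [abs_nonneg s]
  have hlen : ε * (d - c) < v - u :=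
    hdev.trans_le (mul_le_of_le_one_left (sub_pos.2 huv).le hgain_le_one)
  refine ⟨hlen.le, ?_⟩
  have hvu : v - u ≤ d - c := by linarith [hu.1, hv.2]
  have hgain : ε < |s' - s| := by
    by_contra! h
    linarith [mul_le_mul h hvu (sub_pos.2 huv).le ((abs_nonneg _).trans h)]
  linarith

theorem exists_abs_slope_add_le_of_not_isEpsLinearOn {ε : ℝ} (hε : 0 ≤ ε) {f : ℝ → ℝ}
    {c d : ℝ} (hf : LipschitzOnWith 1 f (Icc c d)) (hlin : ¬ IsEpsLinearOn ε f c d) :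
    ∃ u v, c ≤ u ∧ u < v ∧ v ≤ d ∧ ε * (d - c) ≤ v - u ∧
      |slope f c d| + ε ≤ |slope f u v| := by
  simp only [IsEpsLinearOn, not_forall, not_le] at hlin
  obtain ⟨x, hx, hdev⟩ := hlin
  set s := slope f c d
  have hleft : (x - c) * slope f c x = f x - f c := sub_smul_slope f c x
  have hright : (d - x) * slope f x d = f d - f x := sub_smul_slope f x d
  have hwhole : (d - c) * s = f d - f c := sub_smul_slope f c d
  have hdev_left : f x - (f c + s * (x - c)) = (slope f c x - s) * (x - c) := by
    linear_combination -hleft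
  have hdev_right : f x - (f c + s * (x - c)) = (slope f x d - s) * (x - d) := by
    linear_combination hright - hwhole
  have hcx : c < x := by
    refine lt_of_le_of_ne hx.1 fun hxc => ?_
    subst hxc
    simp only [sub_self, mul_zero, add_zero, abs_zero] at hdev
    linarith [mul_nonneg hε (sub_nonneg.2 hx.2)]
  have hxd : x < d := by
    refine lt_of_le_of_ne hx.2 fun hxd => ?_
    rw [hdev_right, hxd, sub_self, mul_zero, abs_zero] at hdev
    linarith [mul_nonneg hε (sub_nonneg.2 (hxd ▸ hx.1))]
  have hcd : c ≤ d := hx.1.trans hx.2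
  rcases le_total 0 (s * (slope f c x - s)) with hsign | hsign
  · have hdev' : ε * (d - c) < |slope f c x - s| * (x - c) := by
      rwa [hdev_left, abs_mul, abs_of_pos (sub_pos.2 hcx)] at hdev
    obtain ⟨hlen, hgain⟩ := abs_slope_add_le_of_deviation hf (left_mem_Icc.2 hcd) hx hcx
      hsign hdev'
    exact ⟨c, x, le_rfl, hcx, hx.2, hlen, hgain⟩
  · have hsign' : 0 ≤ s * (slope f x d - s) := by
      have hprod : s * (slope f x d - s) * (x - d) = s * (slope f c x - s) * (x - c) := by
        rw [mul_assoc, mul_assoc, ← hdev_left, hdev_right]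
      refine nonneg_of_mul_nonpos_left ?_ (sub_neg.2 hxd)
      rw [hprod]
      exact mul_nonpos_of_nonpos_of_nonneg hsign (sub_pos.2 hcx).le
    have hdev' : ε * (d - c) < |slope f x d - s| * (d - x) := by
      rwa [hdev_right, abs_mul, abs_of_neg (sub_neg.2 hxd), neg_sub] at hdev
    obtain ⟨hlen, hgain⟩ := abs_slope_add_le_of_deviation hf hx (right_mem_Icc.2 hcd) hxd
      hsign' hdev'
    exact ⟨x, d, hx.1, hxd, le_rfl, hlen, hgain⟩

theorem exists_isEpsLinearOn_of_lt_abs_slope_add {ε : ℝ} (hε : 0 ≤ ε) {f : ℝ → ℝ} (k : ℕ)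
    (hk : k * ε ≤ 1) {c d : ℝ} (hcd : c < d) (hf : LipschitzOnWith 1 f (Icc c d))
    (hs : 1 < |slope f c d| + (k + 1) * ε) :
    ∃ u v, c ≤ u ∧ u < v ∧ v ≤ d ∧ ε ^ k * (d - c) ≤ v - u ∧ IsEpsLinearOn ε f u v := by
  induction k generalizing c d with
  | zero =>
    refine ⟨c, d, le_rfl, hcd, le_rfl, by simp, ?_⟩
    by_contra hlin
    obtain ⟨u, v, hcu, huv, hvd, -, hgain⟩ :=
      exists_abs_slope_add_le_of_not_isEpsLinearOn hε hf hlin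
    have hslope : |slope f u v| ≤ 1 := by
      exact_mod_cast hf.abs_slope_le ⟨hcu, huv.le.trans hvd⟩ ⟨hcu.trans huv.le, hvd⟩
    push_cast at hs
    linarith
  | succ k ih =>
    push_cast at hk hs
    by_cases hlin : IsEpsLinearOn ε f c d
    · have hεk : ε ^ (k + 1) ≤ 1 := pow_le_one₀ hε (by nlinarith)
      exact ⟨c, d, le_rfl, hcd, le_rfl, mul_le_of_le_one_left (sub_pos.2 hcd).le hεk, hlin⟩
    obtain ⟨u, v, hcu, huv, hvd, hlen, hgain⟩ :=
      exists_abs_slope_add_le_of_not_isEpsLinearOn hε hf hlin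
    obtain ⟨u', v', huu', hu'v', hv'v, hlen', hlin'⟩ :=
      ih (by nlinarith) huv (hf.mono (Icc_subset_Icc hcu hvd)) (by linarith)
    refine ⟨u', v', hcu.trans huu', hu'v', hv'v.trans hvd, ?_, hlin'⟩
    calc ε ^ (k + 1) * (d - c) = ε ^ k * (ε * (d - c)) := by ring
      _ ≤ ε ^ k * (v - u) := by gcongr
      _ ≤ v' - u' := hlen'

/-- For every `ε > 0`, `δ = ε ^ ⌊1/ε⌋` works: for any 1-Lipschitz
`f : [a,b] → ℝ` there is a subinterval `[c,d] ⊆ [a,b]` with `d - c ≥ δ (b - a)` on which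
`f` is `ε`-linear. -/
theorem bourgain_linear_piece (ε : ℝ) (hε : 0 < ε) (a b : ℝ) (hab : a < b) (f : ℝ → ℝ)
    (hf : LipschitzOnWith 1 f (Set.Icc a b)) :
    ∃ c d : ℝ, a ≤ c ∧ c < d ∧ d ≤ b ∧
      ε ^ (⌊1 / ε⌋₊) * (b - a) ≤ d - c ∧
      ∀ x ∈ Set.Icc c d,
        |f x - (f c + (f d - f c) / (d - c) * (x - c))| ≤ ε * (d - c) := by
  set n := ⌊1 / ε⌋₊
  have hn : n * ε ≤ 1 := (le_div_iff₀ hε).1 (Nat.floor_le (by positivity))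
  have hn' : 1 < (n + 1) * ε := (div_lt_iff₀ hε).1 (Nat.lt_floor_add_one _)
  obtain ⟨c, d, hac, hcd, hdb, hlen, hlin⟩ :=
    exists_isEpsLinearOn_of_lt_abs_slope_add hε.le n hn hab hf
      (by linarith [abs_nonneg (slope f a b)])
  exact ⟨c, d, hac, hcd, hdb, hlen, fun x hx => by simpa only [slope_def_field] using hlin x hx⟩
end

section
/- If (f,a,b) is not ε-linear for a 1-Lipschitz function f : [a,b] → ℝ with f(b) ≥ f(a), then, possibly after replacing f by x ↦ −f(a+b−x), there exists a subinterval [a',b'] ⊆ [a,b] with b' − a' ≥ ε(b − a) such that s_f(a',b') ≥ s_f(a,b) + ε. -/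
/-!
If `f` leaves the chord `L` of `[a,b]` by more than `ε (b - a)` at some `x`, then either
`f x - f a` or `f b - f x` exceeds the chord's increment over that piece by more than
`ε (b - a)`. Since `f` is 1-Lipschitz and the chord slope is nonnegative, that piece is longer
than `ε (b - a)`, and since it is no longer than `b - a`, its slope beats the chord slope by at
least `ε`. In particular the reflected function is never needed.
-/

open Set

lemma sub_le_sub_of_lipschitzOnWith_one {f : ℝ → ℝ} {s : Set ℝ}
    (hf : LipschitzOnWith 1 f s) {u v : ℝ} (hu : u ∈ s) (hv : v ∈ s) (huv : u ≤ v) :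
    f v - f u ≤ v - u := by
  have h := hf.le_add_mul hv hu
  rw [NNReal.coe_one, one_mul, Real.dist_eq, abs_of_nonneg (sub_nonneg.mpr huv)] at h
  linarith

lemma add_le_slope_of_mul_add_lt_sub {f : ℝ → ℝ} {a b u v s ε : ℝ}
    (hf : LipschitzOnWith 1 f (Icc a b)) (hu : u ∈ Icc a b) (hv : v ∈ Icc a b) (huv : u ≤ v)
    (hs : 0 ≤ s) (hε : 0 ≤ ε) (hgap : s * (v - u) + ε * (b - a) < f v - f u) :
    u < v ∧ ε * (b - a) ≤ v - u ∧ s + ε ≤ (f v - f u) / (v - u) := by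
  have hrise := sub_le_sub_of_lipschitzOnWith_one hf hu hv huv
  have hlen_le : v - u ≤ b - a := by linarith [hu.1, hv.2]
  have hδ : 0 ≤ ε * (b - a) := mul_nonneg hε (by linarith [hu.1, hu.2])
  have hlen : ε * (b - a) < v - u := by nlinarith [mul_nonneg hs (sub_nonneg.mpr huv)]
  have huv' : 0 < v - u := hδ.trans_lt hlen
  refine ⟨sub_pos.mp huv', hlen.le, ?_⟩
  rw [le_div_iff₀ huv']
  calc (s + ε) * (v - u) = s * (v - u) + ε * (v - u) := by ring
    _ ≤ s * (v - u) + ε * (b - a) := by gcongr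
    _ ≤ f v - f u := hgap.le

/-- If `(f,a,b)` is not `ε`-linear for a 1-Lipschitz `f : [a,b] → ℝ` with
`f b ≥ f a`, then, possibly after replacing `f` by the flip `g x = -f (a + b - x)`, there is
a subinterval `[a',b'] ⊆ [a,b]` with `b' - a' ≥ ε (b - a)` and slope
`s_f(a',b') ≥ s_f(a,b) + ε`. -/
theorem slope_increase_of_not_linear (ε a b : ℝ) (hε : 0 < ε) (hab : a < b) (f : ℝ → ℝ)
    (hf : LipschitzOnWith 1 f (Set.Icc a b)) (hfab : f a ≤ f b)
    (hnotlin : ¬ ∀ x ∈ Set.Icc a b,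
      |f x - (f a + (f b - f a) / (b - a) * (x - a))| ≤ ε * (b - a)) :
    ∃ a' b' : ℝ, a ≤ a' ∧ a' < b' ∧ b' ≤ b ∧ ε * (b - a) ≤ b' - a' ∧
      ((f b - f a) / (b - a) + ε ≤ (f b' - f a') / (b' - a') ∨
       (f b - f a) / (b - a) + ε ≤
         ((-f (a + b - b')) - (-f (a + b - a'))) / (b' - a')) := by
  push Not at hnotlin
  obtain ⟨x, hx, hdev⟩ := hnotlin
  set s := (f b - f a) / (b - a)
  have hs : 0 ≤ s := div_nonneg (sub_nonneg.mpr hfab) (sub_pos.mpr hab).le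
  have hrise : s * (b - a) = f b - f a := div_mul_cancel₀ _ (sub_pos.mpr hab).ne'
  have ha : a ∈ Icc a b := left_mem_Icc.mpr hab.le
  have hb : b ∈ Icc a b := right_mem_Icc.mpr hab.le
  rcases lt_abs.mp hdev with habove | hbelow
  · obtain ⟨hlt, hlen, hslope⟩ :=
      add_le_slope_of_mul_add_lt_sub hf ha hx hx.1 hs hε.le (by linarith)
    exact ⟨a, x, le_rfl, hlt, hx.2, hlen, Or.inl hslope⟩
  · obtain ⟨hlt, hlen, hslope⟩ :=
      add_le_slope_of_mul_add_lt_sub hf hx hb hx.2 hs hε.le (by linarith)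
    exact ⟨x, b, hx.1, hlt, le_rfl, hlen, Or.inl hslope⟩
end

section
/- For every ε > 0 there is τ > 0 such that for any 1-Lipschitz function f : [a,b] → ℝ there exists a finite family of non-overlapping intervals [c_j, d_j] ⊆ [a,b] such that: (i) f is ε-linear on each [c_j,d_j]; (ii) d_j − c_j ≥ τ(b − a) for all j; (iii) the Lebesgue measure of [a,b] \ ⋃_j [c_j,d_j] is at most ε(b − a). -/
open Set MeasureTheory

/-!
Give an interval `[c, d]` the energy `(f d - f c)² / (d - c)`. Splitting `[c, d]` at `x` raises
the energy by `(d - c) / ((x - c) (d - x))` times the squared distance of `f x` from the chord,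
so splitting a non-`ε`-linear interval at a bad point raises it by at least `ε² (d - c)`. For a
1-Lipschitz `f` the energy of a partition of `[a, b]` never exceeds `b - a`. Hence if every
non-`ε`-linear piece is split, round after round, then within `N ≈ 2 / ε³` rounds some partition
has non-`ε`-linear pieces of total length at most `ε (b - a) / 2`. It has at most `2 ^ N` pieces,
so discarding those shorter than `ε (b - a) / 2 ^ (N + 1)` loses at most another `ε (b - a) / 2`.
-/

def IsEpsLinear (f : ℝ → ℝ) (ε : ℝ) (p : ℝ × ℝ) : Prop :=
  ∀ x ∈ Icc p.1 p.2, |f x - (f p.1 + (f p.2 - f p.1) / (p.2 - p.1) * (x - p.1))| ≤ ε * (p.2 - p.1)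

noncomputable def chordEnergy (f : ℝ → ℝ) (p : ℝ × ℝ) : ℝ := (f p.2 - f p.1) ^ 2 / (p.2 - p.1)

open Classical in
noncomputable def nonlinearLength (f : ℝ → ℝ) (ε : ℝ) (p : ℝ × ℝ) : ℝ :=
  if IsEpsLinear f ε p then 0 else p.2 - p.1

def Nonoverlapping (p q : ℝ × ℝ) : Prop := p.2 ≤ q.1 ∨ q.2 ≤ p.1

lemma List.sum_map_flatMap {α β M : Type*} [AddCommMonoid M] (l : List α) (g : α → List β)
    (h : β → M) : ((l.flatMap g).map h).sum = (l.map fun a => ((g a).map h).sum).sum := by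
  induction l <;> simp_all

section Energy

variable {f : ℝ → ℝ} {ε : ℝ}

lemma chordEnergy_add_chordEnergy_sub {c x d : ℝ} (hcx : c < x) (hxd : x < d) :
    chordEnergy f (c, x) + chordEnergy f (x, d) - chordEnergy f (c, d) =
      (d - c) / ((x - c) * (d - x)) * (f x - (f c + (f d - f c) / (d - c) * (x - c))) ^ 2 := by
  have : x - c ≠ 0 := by linarith
  have : d - x ≠ 0 := by linarith
  have : d - c ≠ 0 := by linarith
  simp only [chordEnergy]
  field_simp
  ring

lemma exists_chordEnergy_add_le_of_not_isEpsLinear (hε : 0 ≤ ε) {p : ℝ × ℝ} (hp : p.1 < p.2)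
    (h : ¬ IsEpsLinear f ε p) :
    ∃ x ∈ Ioo p.1 p.2,
      chordEnergy f p + ε ^ 2 * (p.2 - p.1) ≤ chordEnergy f (p.1, x) + chordEnergy f (x, p.2) := by
  obtain ⟨c, d⟩ := p
  simp only [IsEpsLinear, not_forall, not_le] at h hp ⊢
  obtain ⟨x, ⟨hx₁, hx₂⟩, hx⟩ := h
  have hdc : 0 ≤ d - c := by linarith
  have hcx : c < x := by
    refine hx₁.lt_of_ne ?_
    rintro rfl
    simp only [sub_self, mul_zero, add_zero, abs_zero] at hx
    nlinarith
  have hxd : x < d := by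
    refine hx₂.lt_of_ne ?_
    rintro rfl
    rw [div_mul_cancel₀ _ (sub_ne_zero.mpr hcx.ne'), add_sub_cancel, sub_self, abs_zero] at hx
    nlinarith
  refine ⟨x, ⟨hcx, hxd⟩, ?_⟩
  have hsplit := chordEnergy_add_chordEnergy_sub (f := f) hcx hxd
  set e := f x - (f c + (f d - f c) / (d - c) * (x - c))
  suffices ε ^ 2 * (d - c) ≤ (d - c) / ((x - c) * (d - x)) * e ^ 2 by linarith
  have hdev : (ε * (d - c)) ^ 2 ≤ e ^ 2 :=
    sq_le_sq.mpr (by rw [abs_of_nonneg (by positivity)]; exact hx.le)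
  have hprod : (x - c) * (d - x) ≤ (d - c) ^ 2 := by nlinarith
  rw [div_mul_eq_mul_div, le_div_iff₀ (by nlinarith)]
  calc ε ^ 2 * (d - c) * ((x - c) * (d - x)) ≤ ε ^ 2 * (d - c) * (d - c) ^ 2 := by gcongr
    _ ≤ (d - c) * e ^ 2 := by nlinarith

lemma chordEnergy_le_of_lipschitzOnWith {K : NNReal} {s : Set ℝ} (hf : LipschitzOnWith K f s)
    {p : ℝ × ℝ} (h1 : p.1 ∈ s) (h2 : p.2 ∈ s) (hp : p.1 ≤ p.2) :
    chordEnergy f p ≤ K ^ 2 * (p.2 - p.1) := by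
  have hlip := hf.dist_le_mul _ h2 _ h1
  rw [Real.dist_eq, Real.dist_eq, abs_of_nonneg (sub_nonneg.mpr hp)] at hlip
  rcases hp.eq_or_lt with heq | hlt
  · simp [chordEnergy, heq]
  rw [chordEnergy, div_le_iff₀ (sub_pos.mpr hlt), ← sq_abs]
  calc |f p.2 - f p.1| ^ 2 ≤ (K * (p.2 - p.1)) ^ 2 := by gcongr
    _ = K ^ 2 * (p.2 - p.1) * (p.2 - p.1) := by ring

end Energy

section Refine

variable {f : ℝ → ℝ} {ε : ℝ}

open Classical in
/-- Splitting on energy gain rather than on failure of `ε`-linearity builds the gain into the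
definition; `exists_chordEnergy_add_le_of_not_isEpsLinear` makes every non-`ε`-linear `p` split. -/
noncomputable def energySplit (f : ℝ → ℝ) (ε : ℝ) (p : ℝ × ℝ) : List (ℝ × ℝ) :=
  if h : ∃ x ∈ Ioo p.1 p.2,
      chordEnergy f p + ε ^ 2 * (p.2 - p.1) ≤ chordEnergy f (p.1, x) + chordEnergy f (x, p.2)
  then [(p.1, h.choose), (h.choose, p.2)] else [p]

noncomputable def energyRefine (f : ℝ → ℝ) (ε : ℝ) (P : List (ℝ × ℝ)) : List (ℝ × ℝ) :=
  P.flatMap (energySplit f ε)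

lemma energySplit_eq (f : ℝ → ℝ) (ε : ℝ) (p : ℝ × ℝ) :
    energySplit f ε p = [p] ∨ ∃ x ∈ Ioo p.1 p.2, energySplit f ε p = [(p.1, x), (x, p.2)] := by
  unfold energySplit
  split_ifs with h
  · exact Or.inr ⟨_, h.choose_spec.1, rfl⟩
  · exact Or.inl rfl

lemma subinterval_of_mem_energySplit {p q : ℝ × ℝ} (hp : p.1 < p.2) (hq : q ∈ energySplit f ε p) :
    p.1 ≤ q.1 ∧ q.1 < q.2 ∧ q.2 ≤ p.2 := by
  rcases energySplit_eq f ε p with h | ⟨x, hx, h⟩ <;> rw [h] at hq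
  · rw [List.mem_singleton.mp hq]
    exact ⟨le_rfl, hp, le_rfl⟩
  · rcases List.mem_pair.mp hq with rfl | rfl
    · exact ⟨le_rfl, hx.1, hx.2.le⟩
    · exact ⟨hx.1.le, hx.2, le_rfl⟩

lemma pairwise_nonoverlapping_energySplit (p : ℝ × ℝ) :
    (energySplit f ε p).Pairwise Nonoverlapping := by
  rcases energySplit_eq f ε p with h | ⟨x, hx, h⟩ <;> rw [h]
  · exact List.pairwise_singleton _ _
  · simp [Nonoverlapping]

lemma length_energySplit_le (p : ℝ × ℝ) : (energySplit f ε p).length ≤ 2 := by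
  rcases energySplit_eq f ε p with h | ⟨x, hx, h⟩ <;> simp [h]

lemma sum_length_energySplit (p : ℝ × ℝ) :
    ((energySplit f ε p).map fun q => q.2 - q.1).sum = p.2 - p.1 := by
  rcases energySplit_eq f ε p with h | ⟨x, hx, h⟩ <;> simp [h]

lemma chordEnergy_add_le_sum_energySplit (hε : 0 ≤ ε) {p : ℝ × ℝ} (hp : p.1 < p.2) :
    chordEnergy f p + ε ^ 2 * nonlinearLength f ε p ≤
      ((energySplit f ε p).map (chordEnergy f)).sum := by
  unfold energySplit nonlinearLength
  split_ifs with hlin hsplit hsplit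
  · simpa using hsplit.choose_spec.2.trans' (by nlinarith)
  · simp
  · simpa using hsplit.choose_spec.2
  · exact absurd (exists_chordEnergy_add_le_of_not_isEpsLinear hε hp hlin) hsplit

end Refine

structure IsIntervalPartition (a b : ℝ) (P : List (ℝ × ℝ)) : Prop where
  mem : ∀ p ∈ P, a ≤ p.1 ∧ p.1 < p.2 ∧ p.2 ≤ b
  pairwise : P.Pairwise Nonoverlapping
  sum_length : (P.map fun p => p.2 - p.1).sum = b - a

namespace IsIntervalPartition

variable {a b : ℝ} {P : List (ℝ × ℝ)} {f : ℝ → ℝ} {ε : ℝ}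

lemma singleton (hab : a < b) : IsIntervalPartition a b [(a, b)] :=
  ⟨by simpa using hab, List.pairwise_singleton _ _, by simp⟩

lemma energyRefine (hP : IsIntervalPartition a b P) :
    IsIntervalPartition a b (energyRefine f ε P) := by
  have hsub : ∀ p ∈ P, ∀ q ∈ energySplit f ε p, p.1 ≤ q.1 ∧ q.1 < q.2 ∧ q.2 ≤ p.2 :=
    fun p hp _ => subinterval_of_mem_energySplit (hP.mem p hp).2.1
  refine ⟨fun q hq => ?_, ?_, ?_⟩
  · obtain ⟨p, hp, hqp⟩ := List.mem_flatMap.mp hq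
    have := hP.mem p hp
    have := hsub p hp q hqp
    exact ⟨by linarith, by linarith, by linarith⟩
  · refine List.pairwise_flatMap.mpr ⟨fun p _ => pairwise_nonoverlapping_energySplit p, ?_⟩
    refine hP.pairwise.imp_of_mem fun hp hp' hpp' q hq q' hq' => ?_
    have := hsub _ hp q hq
    have := hsub _ hp' q' hq'
    rcases hpp' with h | h
    · exact Or.inl (by linarith)
    · exact Or.inr (by linarith)
  · rw [_root_.energyRefine, List.sum_map_flatMap, ← hP.sum_length]
    exact congrArg List.sum (List.map_congr_left fun p _ => sum_length_energySplit p)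

lemma sum_chordEnergy_le {K : NNReal} (hP : IsIntervalPartition a b P)
    (hf : LipschitzOnWith K f (Icc a b)) :
    (P.map (chordEnergy f)).sum ≤ K ^ 2 * (b - a) := by
  rw [← hP.sum_length, ← List.sum_map_mul_left]
  refine List.sum_le_sum fun p hp => ?_
  obtain ⟨ha, hp, hb⟩ := hP.mem p hp
  exact chordEnergy_le_of_lipschitzOnWith hf ⟨ha, by linarith⟩ ⟨by linarith, hb⟩ hp.le

end IsIntervalPartition

lemma length_energyRefine_le (f : ℝ → ℝ) (ε : ℝ) (P : List (ℝ × ℝ)) :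
    (energyRefine f ε P).length ≤ 2 * P.length := by
  induction P with
  | nil => rfl
  | cons p P ih =>
    rw [energyRefine, List.flatMap_cons, List.length_append, List.length_cons]
    have := length_energySplit_le (f := f) (ε := ε) p
    unfold energyRefine at ih
    omega

lemma sum_chordEnergy_add_le_energyRefine {f : ℝ → ℝ} {ε : ℝ} (hε : 0 ≤ ε) {P : List (ℝ × ℝ)}
    (hP : ∀ p ∈ P, p.1 < p.2) :
    (P.map (chordEnergy f)).sum + ε ^ 2 * (P.map (nonlinearLength f ε)).sum ≤
      ((energyRefine f ε P).map (chordEnergy f)).sum := by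
  rw [energyRefine, List.sum_map_flatMap, ← List.sum_map_mul_left, ← List.sum_map_add]
  exact List.sum_le_sum fun p hp => chordEnergy_add_le_sum_energySplit hε (hP p hp)

section Iterate

variable {f : ℝ → ℝ} {ε a b : ℝ}

lemma isIntervalPartition_iterate_energyRefine (hab : a < b) (k : ℕ) :
    IsIntervalPartition a b ((energyRefine f ε)^[k] [(a, b)]) := by
  induction k with
  | zero => exact .singleton hab
  | succ k ih => simpa only [Function.iterate_succ_apply'] using ih.energyRefine

lemma length_iterate_energyRefine_le (k : ℕ) :
    ((energyRefine f ε)^[k] [(a, b)]).length ≤ 2 ^ k := by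
  induction k with
  | zero => rfl
  | succ k ih =>
    rw [Function.iterate_succ_apply', pow_succ']
    exact (length_energyRefine_le f ε _).trans (Nat.mul_le_mul_left 2 ih)

lemma sum_range_nonlinearLength_iterate_le {K : NNReal} (hε : 0 ≤ ε) (hab : a < b)
    (hf : LipschitzOnWith K f (Icc a b)) (N : ℕ) :
    ε ^ 2 * ∑ k ∈ Finset.range N, (((energyRefine f ε)^[k] [(a, b)]).map (nonlinearLength f ε)).sum
      ≤ K ^ 2 * (b - a) := by
  set P := fun k => (energyRefine f ε)^[k] [(a, b)]
  set E := fun k => ((P k).map (chordEnergy f)).sum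
  have hP : ∀ k, IsIntervalPartition a b (P k) := isIntervalPartition_iterate_energyRefine hab
  have hgain : ∀ k, ε ^ 2 * ((P k).map (nonlinearLength f ε)).sum ≤ E (k + 1) - E k := fun k => by
    have := sum_chordEnergy_add_le_energyRefine (f := f) hε fun p hp => ((hP k).mem p hp).2.1
    simp only [E, P, Function.iterate_succ_apply'] at this ⊢
    linarith
  have hE0 : 0 ≤ E 0 := by
    simpa [E, P, chordEnergy] using div_nonneg (sq_nonneg _) (sub_nonneg.mpr hab.le)
  calc ε ^ 2 * ∑ k ∈ Finset.range N, ((P k).map (nonlinearLength f ε)).sum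
      ≤ ∑ k ∈ Finset.range N, (E (k + 1) - E k) := by
        rw [Finset.mul_sum]; exact Finset.sum_le_sum fun k _ => hgain k
    _ = E N - E 0 := Finset.sum_range_sub E N
    _ ≤ K ^ 2 * (b - a) := by
        linarith [(hP N).sum_chordEnergy_le hf]

end Iterate

lemma volume_Icc_diff_iUnion_Icc_le {ι : Type*} [Fintype ι] {a b : ℝ} {c d : ι → ℝ}
    (hcd : ∀ j, a ≤ c j ∧ c j ≤ d j ∧ d j ≤ b)
    (hdisj : Pairwise fun i j => d i ≤ c j ∨ d j ≤ c i) :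
    volume (Icc a b \ ⋃ j, Icc (c j) (d j)) ≤ ENNReal.ofReal (b - a - ∑ j, (d j - c j)) := by
  have hsub : (⋃ j, Ioc (c j) (d j)) ⊆ Icc a b :=
    iUnion_subset fun j => Ioc_subset_Icc_self.trans (Icc_subset_Icc (hcd j).1 (hcd j).2.2)
  have hlen : 0 ≤ ∑ j, (d j - c j) := Finset.sum_nonneg fun j _ => sub_nonneg.mpr (hcd j).2.1
  have hvol : volume (⋃ j, Ioc (c j) (d j)) = ENNReal.ofReal (∑ j, (d j - c j)) := by
    have hIoc : Pairwise (Function.onFun Disjoint fun j => Ioc (c j) (d j)) :=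
      hdisj.mono fun i j h => h.elim Ioc_disjoint_Ioc_of_le fun h => (Ioc_disjoint_Ioc_of_le h).symm
    rw [measure_iUnion hIoc fun j => measurableSet_Ioc, tsum_fintype,
      ENNReal.ofReal_sum_of_nonneg fun j _ => sub_nonneg.mpr (hcd j).2.1]
    simp only [Real.volume_Ioc]
  calc volume (Icc a b \ ⋃ j, Icc (c j) (d j))
      ≤ volume (Icc a b \ ⋃ j, Ioc (c j) (d j)) :=
        measure_mono (sdiff_subset_sdiff_right (iUnion_mono fun j => Ioc_subset_Icc_self))
    _ = ENNReal.ofReal (b - a) - ENNReal.ofReal (∑ j, (d j - c j)) := by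
        rw [measure_sdiff hsub (MeasurableSet.iUnion fun j => measurableSet_Ioc).nullMeasurableSet
          (hvol ▸ ENNReal.ofReal_ne_top), Real.volume_Icc, hvol]
    _ = ENNReal.ofReal (b - a - ∑ j, (d j - c j)) := (ENNReal.ofReal_sub _ hlen).symm

lemma exists_fin_intervals_of_list {R : List (ℝ × ℝ)} (hR : R.Pairwise Nonoverlapping) :
    ∃ (n : ℕ) (c d : Fin n → ℝ), (∀ j, (c j, d j) ∈ R) ∧
      (Pairwise fun i j => d i ≤ c j ∨ d j ≤ c i) ∧
      ∑ j, (d j - c j) = (R.map fun p => p.2 - p.1).sum := by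
  refine ⟨R.length, fun j => R[j].1, fun j => R[j].2, fun j => R.getElem_mem j.2, ?_,
    Fin.sum_univ_fun_getElem R fun p => p.2 - p.1⟩
  intro i j hij
  rcases hij.lt_or_gt with h | h
  · exact List.pairwise_iff_get.mp hR i j h
  · exact (List.pairwise_iff_get.mp hR j i h).symm

namespace IsIntervalPartition

variable {a b : ℝ} {P : List (ℝ × ℝ)} {f : ℝ → ℝ} {ε ℓ : ℝ}

open Classical in
lemma sub_sum_length_filter_le (hP : IsIntervalPartition a b P) (hℓ : 0 ≤ ℓ) :
    b - a - ((P.filter fun p => IsEpsLinear f ε p ∧ ℓ ≤ p.2 - p.1).map fun p => p.2 - p.1).sum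
      ≤ (P.map (nonlinearLength f ε)).sum + P.length * ℓ := by
  have hpt : ∀ p ∈ P, p.2 - p.1 ≤ (if IsEpsLinear f ε p ∧ ℓ ≤ p.2 - p.1 then p.2 - p.1 else 0) +
      nonlinearLength f ε p + ℓ := fun p hp => by
    have := (hP.mem p hp).2.1
    unfold nonlinearLength
    split_ifs with hsel hlin hlin
    · linarith
    · linarith
    · linarith [lt_of_not_ge fun h => hsel ⟨hlin, h⟩]
    · linarith
  have := List.sum_le_sum hpt
  rw [List.sum_map_add, List.sum_map_add, List.sum_map_ite] at this
  simp only [List.map_const', List.sum_replicate, nsmul_eq_mul, mul_zero, add_zero] at this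
  linarith [hP.sum_length]

lemma exists_cover (hP : IsIntervalPartition a b P) (hℓ : 0 ≤ ℓ) :
    ∃ (n : ℕ) (c d : Fin n → ℝ),
      (∀ j, a ≤ c j ∧ c j < d j ∧ d j ≤ b) ∧ (∀ j, IsEpsLinear f ε (c j, d j)) ∧
      (∀ j, ℓ ≤ d j - c j) ∧ (∀ i j, i ≠ j → d i ≤ c j ∨ d j ≤ c i) ∧
      volume (Icc a b \ ⋃ j, Icc (c j) (d j)) ≤
        ENNReal.ofReal ((P.map (nonlinearLength f ε)).sum + P.length * ℓ) := by
  classical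
  obtain ⟨n, c, d, hmem, hdisj, hsum⟩ := exists_fin_intervals_of_list
    (hP.pairwise.sublist (List.filter_sublist (p := fun p => IsEpsLinear f ε p ∧ ℓ ≤ p.2 - p.1)))
  simp only [List.mem_filter, decide_eq_true_eq] at hmem
  have hbounds : ∀ j, a ≤ c j ∧ c j < d j ∧ d j ≤ b := fun j => hP.mem _ (hmem j).1
  refine ⟨n, c, d, hbounds, fun j => (hmem j).2.1, fun j => (hmem j).2.2, hdisj, ?_⟩
  refine (volume_Icc_diff_iUnion_Icc_le (fun j => ?_) hdisj).trans (ENNReal.ofReal_le_ofReal ?_)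
  · exact ⟨(hbounds j).1, (hbounds j).2.1.le, (hbounds j).2.2⟩
  · rw [hsum]
    linarith [hP.sub_sum_length_filter_le (f := f) (ε := ε) hℓ]

end IsIntervalPartition

/-- For every `ε > 0` there is `τ > 0` such that any 1-Lipschitz
`f : [a,b] → ℝ` admits a finite family of non-overlapping subintervals `[c j, d j] ⊆ [a,b]`
on each of which `f` is `ε`-linear, all of length at least `τ (b - a)`, covering all of
`[a,b]` except a set of Lebesgue measure at most `ε (b - a)`. -/
theorem linear_pieces_cover (ε : ℝ) (hε : 0 < ε) :
    ∃ τ : ℝ, 0 < τ ∧ ∀ a b : ℝ, a < b → ∀ f : ℝ → ℝ, LipschitzOnWith 1 f (Set.Icc a b) →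
      ∃ (n : ℕ) (c d : Fin n → ℝ),
        (∀ j, a ≤ c j ∧ c j < d j ∧ d j ≤ b) ∧
        (∀ j, ∀ x ∈ Set.Icc (c j) (d j),
          |f x - (f (c j) + (f (d j) - f (c j)) / (d j - c j) * (x - c j))|
            ≤ ε * (d j - c j)) ∧
        (∀ j, τ * (b - a) ≤ d j - c j) ∧
        (∀ i j, i ≠ j → d i ≤ c j ∨ d j ≤ c i) ∧
        volume (Set.Icc a b \ ⋃ j, Set.Icc (c j) (d j)) ≤ ENNReal.ofReal (ε * (b - a)) := by
  obtain ⟨N, hN⟩ := exists_nat_gt (2 / ε ^ 3)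
  have hN0 : 0 < N := by exact_mod_cast (show (0 : ℝ) < 2 / ε ^ 3 by positivity).trans hN
  refine ⟨ε / 2 ^ (N + 1), by positivity, fun a b hab f hf => ?_⟩
  have hba : 0 < b - a := sub_pos.mpr hab
  obtain ⟨k, hk, hPk⟩ : ∃ k ∈ Finset.range N,
      (((energyRefine f ε)^[k] [(a, b)]).map (nonlinearLength f ε)).sum ≤ ε / 2 * (b - a) := by
    refine Finset.exists_le_of_sum_le (Finset.nonempty_range_iff.mpr hN0.ne') ?_
    have hsum := sum_range_nonlinearLength_iterate_le hε.le hab hf N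
    rw [NNReal.coe_one, one_pow, one_mul, ← le_div_iff₀' (by positivity)] at hsum
    calc _ ≤ (b - a) / ε ^ 2 := hsum
      _ = 2 / ε ^ 3 * (ε / 2 * (b - a)) := by field_simp
      _ ≤ _ := by rw [Finset.sum_const, Finset.card_range, nsmul_eq_mul]; gcongr
  obtain ⟨n, c, d, hcd, hlin, hlong, hdisj, hvol⟩ :=
    (isIntervalPartition_iterate_energyRefine hab k).exists_cover (f := f) (ε := ε)
      (ℓ := ε / 2 ^ (N + 1) * (b - a)) (by positivity)
  refine ⟨n, c, d, hcd, hlin, hlong, hdisj, hvol.trans (ENNReal.ofReal_le_ofReal ?_)⟩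
  have hlen : (((energyRefine f ε)^[k] [(a, b)]).length : ℝ) ≤ 2 ^ N := by
    exact_mod_cast (length_iterate_energyRefine_le k).trans
      (Nat.pow_le_pow_right two_pos (Finset.mem_range.mp hk).le)
  calc _ ≤ ε / 2 * (b - a) + 2 ^ N * (ε / 2 ^ (N + 1) * (b - a)) := by gcongr
    _ = ε * (b - a) := by field_simp; ring
end

section
/- Let 0 < σ < κ < 1. Let ρ be a Borel probability measure on the unit sphere S^{d−1} such that ρ of the open r-neighborhood of any linear hyperplane H intersected with S^{d−1} is at most C r^κ for all r > 0. Then for any Borel probability measure μ on ℝ^d, the ρ-average of the σ-energy of the projections satisfies ∫_{S^{d−1}} E_σ(P_θ μ) dρ(θ) ≤ (1 + Cσ/(κ−σ)) E_σ(μ), where P_θ(x) = ⟨θ,x⟩ and E_σ(ν) = ∬ |x−y|^{−σ} dν(x) dν(y). -/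
open MeasureTheory ENNReal

/-- The `σ`-energy `E_σ(ν) = ∬ dist(x,y)^{-σ} dν dν` of a measure. -/
noncomputable def rieszEnergy (σ : ℝ) {X : Type*} [PseudoMetricSpace X] [MeasurableSpace X]
    (ν : Measure X) : ℝ≥0∞ :=
  ∫⁻ x, ∫⁻ y, ENNReal.ofReal (dist x y ^ (-σ)) ∂ν ∂ν

open Set in
lemma kaufman_key {d : ℕ} {σ κ C : ℝ} (hσ : 0 < σ) (hσκ : σ < κ)
    {ρ : Measure (EuclideanSpace ℝ (Fin d))} [IsProbabilityMeasure ρ]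
    (hρsphere : ρ (Metric.sphere (0 : EuclideanSpace ℝ (Fin d)) 1)ᶜ = 0)
    (hρ : ∀ H : Submodule ℝ (EuclideanSpace ℝ (Fin d)), Module.finrank ℝ H = d - 1 →
      ∀ r : ℝ, 0 < r →
        ρ (Metric.thickening r (H : Set (EuclideanSpace ℝ (Fin d))) ∩
            Metric.sphere (0 : EuclideanSpace ℝ (Fin d)) 1) ≤ ENNReal.ofReal (C * r ^ κ))
    {u : EuclideanSpace ℝ (Fin d)} (hu : ‖u‖ = 1) :
    ∫⁻ θ, ENNReal.ofReal (|(inner ℝ θ u : ℝ)| ^ (-σ)) ∂ρ ≤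
      ENNReal.ofReal (1 + C * σ / (κ - σ)) := by
  have hune : u ≠ 0 := by intro h; rw [h] at hu; simp at hu
  have hκσ : 0 < κ - σ := sub_pos.mpr hσκ
  set H : Submodule ℝ (EuclideanSpace ℝ (Fin d)) := (ℝ ∙ u)ᗮ with hHdef
  have hHrank : Module.finrank ℝ H = d - 1 := by
    have h1 := Submodule.finrank_add_finrank_orthogonal (ℝ ∙ u)
    rw [finrank_span_singleton hune, finrank_euclideanSpace_fin] at h1
    rw [hHdef]
    omega
  -- membership in thickening
  have hmem : ∀ (θ : EuclideanSpace ℝ (Fin d)) (r : ℝ), |(inner ℝ θ u : ℝ)| < r →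
      θ ∈ Metric.thickening r (H : Set (EuclideanSpace ℝ (Fin d))) := by
    intro θ r hr
    rw [Metric.mem_thickening_iff]
    refine ⟨θ - (inner ℝ u θ : ℝ) • u, ?_, ?_⟩
    · rw [SetLike.mem_coe, hHdef, Submodule.mem_orthogonal_singleton_iff_inner_right]
      rw [inner_sub_right, inner_smul_right, real_inner_self_eq_norm_sq, hu]
      ring
    · rw [dist_eq_norm, _root_.sub_sub_cancel, norm_smul, Real.norm_eq_abs, hu, mul_one,
        real_inner_comm]
      exact hr
  -- ρ of the sphere is 1
  have hρS : ρ (Metric.sphere (0 : EuclideanSpace ℝ (Fin d)) 1) = 1 := by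
    exact (prob_compl_eq_zero_iff Metric.isClosed_sphere.measurableSet).mp hρsphere
  -- C is positive
  have hC : 0 < C := by
    have h2 := hρ H hHrank 2 (by norm_num)
    have hsub : Metric.sphere (0 : EuclideanSpace ℝ (Fin d)) 1 ⊆
        Metric.thickening 2 (H : Set (EuclideanSpace ℝ (Fin d))) ∩ Metric.sphere 0 1 := by
      intro θ hθ
      refine ⟨hmem θ 2 ?_, hθ⟩
      calc |(inner ℝ θ u : ℝ)| ≤ ‖θ‖ * ‖u‖ := abs_real_inner_le_norm θ u
        _ = 1 := by rw [mem_sphere_zero_iff_norm.mp hθ, hu]; ring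
        _ < 2 := one_lt_two
    have hle : (1 : ℝ≥0∞) ≤ ENNReal.ofReal (C * 2 ^ κ) := by
      rw [← hρS]
      exact le_trans (measure_mono hsub) h2
    have h1 : (1 : ℝ) ≤ C * 2 ^ κ := ENNReal.one_le_ofReal.mp hle
    nlinarith [Real.rpow_pos_of_pos (by norm_num : (0:ℝ) < 2) κ]
  -- the integrand
  set f : EuclideanSpace ℝ (Fin d) → ℝ := fun θ => |(inner ℝ θ u : ℝ)| ^ (-σ) with hfdef
  have hf_meas : Measurable f := by
    have h : Measurable fun θ : EuclideanSpace ℝ (Fin d) => (inner ℝ θ u : ℝ) :=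
      (continuous_id.inner continuous_const).measurable
    exact h.abs.pow measurable_const
  rw [lintegral_eq_lintegral_meas_lt ρ
    (Filter.Eventually.of_forall fun θ => Real.rpow_nonneg (abs_nonneg _) _)
    hf_meas.aemeasurable]
  -- split the t-integral
  have hsplit : (Ioi (0 : ℝ)) = Ioc 0 1 ∪ Ioi 1 := (Ioc_union_Ioi_eq_Ioi zero_le_one).symm
  rw [hsplit, lintegral_union measurableSet_Ioi (Ioc_disjoint_Ioi le_rfl)]
  -- bound on (0,1]
  have h1 : ∫⁻ t in Ioc (0:ℝ) 1, ρ {θ | t < f θ} ≤ 1 := by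
    calc ∫⁻ t in Ioc (0:ℝ) 1, ρ {θ | t < f θ} ≤ ∫⁻ _ in Ioc (0:ℝ) 1, 1 :=
          lintegral_mono fun t => prob_le_one
      _ = 1 := by simp
  -- bound on (1,∞)
  have h2 : ∀ t : ℝ, t ∈ Ioi (1:ℝ) →
      ρ {θ | t < f θ} ≤ ENNReal.ofReal (C * t ^ (-(κ/σ))) := by
    intro t ht
    have ht1 : (1:ℝ) < t := ht
    have ht0 : 0 < t := lt_trans one_pos ht1
    set r : ℝ := t ^ (-(1/σ)) with hrdef
    have hr0 : 0 < r := Real.rpow_pos_of_pos ht0 _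
    have hrσ : r ^ (-σ) = t := by
      rw [hrdef, ← Real.rpow_mul ht0.le]
      rw [show -(1/σ) * -σ = 1 by field_simp, Real.rpow_one]
    have hsub : {θ | t < f θ} ⊆ Metric.thickening r
        ((H : Set (EuclideanSpace ℝ (Fin d)))) := by
      intro θ hθ
      apply hmem
      by_contra hcon
      push_neg at hcon
      have hle : f θ ≤ r ^ (-σ) :=
        Real.rpow_le_rpow_of_nonpos hr0 hcon (neg_nonpos.mpr hσ.le)
      rw [hrσ] at hle
      exact absurd hθ (not_lt.mpr hle)
    have hrκ : C * r ^ κ = C * t ^ (-(κ/σ)) := by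
      rw [hrdef, ← Real.rpow_mul ht0.le]
      congr 2
      field_simp
    calc ρ {θ | t < f θ}
        ≤ ρ ((Metric.thickening r (H : Set (EuclideanSpace ℝ (Fin d))) ∩
            Metric.sphere 0 1) ∪ (Metric.sphere (0 : EuclideanSpace ℝ (Fin d)) 1)ᶜ) := by
          refine measure_mono fun θ hθ => ?_
          by_cases hsp : θ ∈ Metric.sphere (0 : EuclideanSpace ℝ (Fin d)) 1
          · exact Or.inl ⟨hsub hθ, hsp⟩
          · exact Or.inr hsp
      _ ≤ ρ (Metric.thickening r (H : Set (EuclideanSpace ℝ (Fin d))) ∩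
            Metric.sphere 0 1) + ρ (Metric.sphere (0 : EuclideanSpace ℝ (Fin d)) 1)ᶜ :=
          measure_union_le _ _
      _ = ρ (Metric.thickening r (H : Set (EuclideanSpace ℝ (Fin d))) ∩
            Metric.sphere 0 1) := by rw [hρsphere, add_zero]
      _ ≤ ENNReal.ofReal (C * r ^ κ) := hρ H hHrank r hr0
      _ = ENNReal.ofReal (C * t ^ (-(κ/σ))) := by rw [hrκ]
  have h2' : ∫⁻ t in Ioi (1:ℝ), ρ {θ | t < f θ} ≤
      ∫⁻ t in Ioi (1:ℝ), ENNReal.ofReal (C * t ^ (-(κ/σ))) := by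
    refine setLIntegral_mono ?_ h2
    exact (measurable_const.mul ((measurable_id.pow measurable_const))).ennreal_ofReal
  have h3 : ∫⁻ t in Ioi (1:ℝ), ENNReal.ofReal (C * t ^ (-(κ/σ))) =
      ENNReal.ofReal (C * σ / (κ - σ)) := by
    have hexp : -(κ/σ) < -1 := by
      rw [neg_lt_neg_iff]
      exact (one_lt_div hσ).mpr hσκ
    have hint : IntegrableOn (fun t : ℝ => t ^ (-(κ/σ))) (Ioi 1) :=
      integrableOn_Ioi_rpow_of_lt hexp one_pos
    rw [← ofReal_integral_eq_lintegral_ofReal (hint.const_mul C)]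
    · rw [MeasureTheory.integral_const_mul, integral_Ioi_rpow_of_lt hexp one_pos]
      congr 1
      rw [Real.one_rpow]
      have hne : σ ≠ 0 := hσ.ne'
      have hne2 : κ - σ ≠ 0 := hκσ.ne'
      have hne3 : σ - κ ≠ 0 := fun h => hne2 (by linarith)
      field_simp
      linear_combination mul_inv_cancel₀ (show -κ + σ ≠ 0 from fun h => hne3 (by linarith))
    · filter_upwards [self_mem_ae_restrict (measurableSet_Ioi : MeasurableSet (Ioi (1:ℝ)))]
        with t ht
      have : (0:ℝ) < t := lt_trans one_pos ht
      positivity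
  calc (∫⁻ t in Ioc (0:ℝ) 1, ρ {θ | t < f θ}) + ∫⁻ t in Ioi (1:ℝ), ρ {θ | t < f θ}
      ≤ 1 + ENNReal.ofReal (C * σ / (κ - σ)) := add_le_add h1 (h2'.trans_eq h3)
    _ = ENNReal.ofReal (1 + C * σ / (κ - σ)) := by
        rw [ENNReal.ofReal_add (by norm_num) (by positivity), ENNReal.ofReal_one]

/-- Kaufman-type estimate. Let `0 < σ < κ < 1` and let `ρ` be a Borel
probability measure on the sphere `S^{d-1}` such that the `ρ`-measure of the open
`r`-neighborhood of any linear hyperplane intersected with the sphere is at most `C r^κ`.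
Then for any Borel probability measure `μ` on `ℝ^d`,
`∫ E_σ(P_θ μ) dρ(θ) ≤ (1 + Cσ/(κ-σ)) E_σ(μ)`. -/
theorem kaufman_energy_projection (d : ℕ) (σ κ C : ℝ) (hσ : 0 < σ) (hσκ : σ < κ)
    (hκ : κ < 1)
    (ρ : Measure (EuclideanSpace ℝ (Fin d))) [IsProbabilityMeasure ρ]
    (hρsphere : ρ (Metric.sphere (0 : EuclideanSpace ℝ (Fin d)) 1)ᶜ = 0)
    (hρ : ∀ H : Submodule ℝ (EuclideanSpace ℝ (Fin d)), Module.finrank ℝ H = d - 1 →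
      ∀ r : ℝ, 0 < r →
        ρ (Metric.thickening r (H : Set (EuclideanSpace ℝ (Fin d))) ∩
            Metric.sphere (0 : EuclideanSpace ℝ (Fin d)) 1) ≤ ENNReal.ofReal (C * r ^ κ))
    (μ : Measure (EuclideanSpace ℝ (Fin d))) [IsProbabilityMeasure μ] :
    ∫⁻ θ, rieszEnergy σ (μ.map (fun x => (inner ℝ θ x : ℝ))) ∂ρ ≤
      ENNReal.ofReal (1 + C * σ / (κ - σ)) * rieszEnergy σ μ := by
  classical
  set E := EuclideanSpace ℝ (Fin d)
  set K : ℝ := 1 + C * σ / (κ - σ) with hKdef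
  set F : E → E → E → ℝ≥0∞ :=
    fun θ x y => ENNReal.ofReal (|(inner ℝ θ x : ℝ) - (inner ℝ θ y : ℝ)| ^ (-σ)) with hFdef
  have hPmeas : ∀ θ : E, Measurable fun x : E => (inner ℝ θ x : ℝ) :=
    fun θ => (continuous_const.inner continuous_id).measurable
  -- rewrite projected energy
  have hE : ∀ θ : E, rieszEnergy σ (μ.map (fun x => (inner ℝ θ x : ℝ))) =
      ∫⁻ x, ∫⁻ y, F θ x y ∂μ ∂μ := by
    intro θ
    unfold rieszEnergy
    have inner_eq : ∀ a : ℝ,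
        ∫⁻ b, ENNReal.ofReal (dist a b ^ (-σ)) ∂(μ.map (fun x => (inner ℝ θ x : ℝ))) =
        ∫⁻ y, ENNReal.ofReal (|a - (inner ℝ θ y : ℝ)| ^ (-σ)) ∂μ := by
      intro a
      have hm : Measurable fun b : ℝ => ENNReal.ofReal (dist a b ^ (-σ)) :=
        ((measurable_const.dist measurable_id).pow measurable_const).ennreal_ofReal
      rw [lintegral_map hm (hPmeas θ)]
      simp_rw [Real.dist_eq]
      rfl
    rw [lintegral_congr inner_eq]
    have hm2 : Measurable fun a : ℝ =>
        ∫⁻ y, ENNReal.ofReal (|a - (inner ℝ θ y : ℝ)| ^ (-σ)) ∂μ := by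
      have : Measurable fun p : ℝ × E =>
          ENNReal.ofReal (|p.1 - (inner ℝ θ p.2 : ℝ)| ^ (-σ)) :=
        ((measurable_fst.sub ((hPmeas θ).comp measurable_snd)).abs.pow
          measurable_const).ennreal_ofReal
      exact this.lintegral_prod_right'
    rw [lintegral_map hm2 (hPmeas θ)]
  rw [lintegral_congr hE]
  -- pointwise bound
  have key : ∀ x y : E, ∫⁻ θ, F θ x y ∂ρ ≤
      ENNReal.ofReal K * ENNReal.ofReal (dist x y ^ (-σ)) := by
    intro x y
    by_cases hxy : x = y
    · subst hxy
      have : ∀ θ : E, F θ x x = 0 := by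
        intro θ
        simp [hFdef, Real.zero_rpow (neg_ne_zero.mpr hσ.ne')]
      simp [this]
    · have hd : 0 < dist x y := dist_pos.mpr hxy
      set u : E := (dist x y)⁻¹ • (x - y) with hudef
      have hu : ‖u‖ = 1 := by
        rw [hudef, norm_smul, norm_inv, Real.norm_eq_abs, abs_of_pos hd, ← dist_eq_norm,
          inv_mul_cancel₀ hd.ne']
      have hinner : ∀ θ : E, (inner ℝ θ x : ℝ) - (inner ℝ θ y : ℝ) =
          dist x y * (inner ℝ θ u : ℝ) := by
        intro θ
        rw [← inner_sub_right, hudef, inner_smul_right]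
        field_simp
      have hFeq : ∀ θ : E, F θ x y =
          ENNReal.ofReal (dist x y ^ (-σ)) * ENNReal.ofReal (|(inner ℝ θ u : ℝ)| ^ (-σ)) := by
        intro θ
        rw [hFdef]
        simp only [hinner, abs_mul, abs_of_pos hd]
        rw [Real.mul_rpow hd.le (abs_nonneg _), ENNReal.ofReal_mul (Real.rpow_nonneg hd.le _)]
      simp_rw [hFeq]
      rw [lintegral_const_mul' _ _ ENNReal.ofReal_ne_top]
      rw [mul_comm (ENNReal.ofReal K)]
      exact mul_le_mul_right (kaufman_key hσ hσκ hρsphere hρ hu) _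
  -- measurability for swaps
  have hGmeas : Measurable (fun q : (E × E) × E =>
      ENNReal.ofReal (|(inner ℝ q.1.1 q.1.2 : ℝ) - (inner ℝ q.1.1 q.2 : ℝ)| ^ (-σ))) := by
    have c1 : Continuous fun q : (E × E) × E => (inner ℝ q.1.1 q.1.2 : ℝ) :=
      (continuous_fst.fst).inner (continuous_fst.snd)
    have c2 : Continuous fun q : (E × E) × E => (inner ℝ q.1.1 q.2 : ℝ) :=
      (continuous_fst.fst).inner continuous_snd
    exact (((c1.sub c2).abs).measurable.pow measurable_const).ennreal_ofReal
  -- first swap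
  have swap1 : ∫⁻ θ, ∫⁻ x, ∫⁻ y, F θ x y ∂μ ∂μ ∂ρ =
      ∫⁻ x, ∫⁻ θ, ∫⁻ y, F θ x y ∂μ ∂ρ ∂μ := by
    apply lintegral_lintegral_swap
    apply Measurable.aemeasurable
    have : Measurable fun p : E × E => ∫⁻ y, F p.1 p.2 y ∂μ :=
      Measurable.lintegral_prod_right' hGmeas
    exact this
  rw [swap1]
  -- second swap inside
  have swap2 : ∀ x : E, ∫⁻ θ, ∫⁻ y, F θ x y ∂μ ∂ρ = ∫⁻ y, ∫⁻ θ, F θ x y ∂ρ ∂μ := by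
    intro x
    apply lintegral_lintegral_swap
    apply Measurable.aemeasurable
    have : Measurable (fun p : E × E => F p.1 x p.2) := by
      have c1 : Continuous fun p : E × E => (inner ℝ p.1 x : ℝ) :=
        continuous_fst.inner continuous_const
      have c2 : Continuous fun p : E × E => (inner ℝ p.1 p.2 : ℝ) :=
        continuous_fst.inner continuous_snd
      exact (((c1.sub c2).abs).measurable.pow measurable_const).ennreal_ofReal
    exact this
  calc ∫⁻ x, ∫⁻ θ, ∫⁻ y, F θ x y ∂μ ∂ρ ∂μ
      = ∫⁻ x, ∫⁻ y, ∫⁻ θ, F θ x y ∂ρ ∂μ ∂μ := lintegral_congr swap2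
    _ ≤ ∫⁻ x, ∫⁻ y, ENNReal.ofReal K * ENNReal.ofReal (dist x y ^ (-σ)) ∂μ ∂μ :=
        lintegral_mono fun x => lintegral_mono fun y => key x y
    _ = ENNReal.ofReal K * rieszEnergy σ μ := by
        unfold rieszEnergy
        simp_rw [lintegral_const_mul' _ _ ENNReal.ofReal_ne_top]
end

section
/- Let μ be a probability measure on [0,1)^d that is (σ;T)-regular for some σ = (σ_1,…,σ_ℓ) ∈ [0,d]^ℓ and T ∈ ℕ, and let X be its dyadic support. Then: (i) for every dyadic cube Q of side 2^{−jT} with μ(Q) > 0, 2^{−j} 2^{−T(σ_1+⋯+σ_j)} ≤ μ(Q) ≤ 2^{−T(σ_1+⋯+σ_j)}; (ii) writing m = Tℓ and β = (σ_1+⋯+σ_ℓ)/ℓ, the number N(X,m) of dyadic cubes of side 2^{−m} meeting X satisfies 2^{βm} ≤ N(X,m) ≤ 2^{(β+1/T)m}; (iii) 2^{−ℓ} μ ≤ 1_X/|X| ≤ 2^{ℓ} μ as measures, where |X| is the Lebesgue measure of X. -/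
/-!
Iterating the regularity inequalities down from the unit cube, which carries all the mass, gives
(i). At the finest level `m = Tℓ` the measure has constant density on each cube, so the dyadic
support is exactly the union of the level-`m` cubes of positive measure, and each of them has mass
between `2^{-ℓ} 2^{-T(σ_1+⋯+σ_ℓ)}` and `2^{-T(σ_1+⋯+σ_ℓ)}`. These masses add up to `1`, which
bounds their number `N` as in (ii) and puts `N μ(Q)`, the density of `μ` with respect to the
normalised Lebesgue measure on the support, between `2^{-ℓ}` and `2^ℓ`, which is (iii).
-/

open MeasureTheory ENNReal

/-- The half-open dyadic cube of side `2^{-j}` in `ℝ^d` indexed by `k : Fin d → ℤ`. -/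
def dyCube (d j : ℕ) (k : Fin d → ℤ) : Set (Fin d → ℝ) :=
  {x | ∀ i, (k i : ℝ) / 2 ^ j ≤ x i ∧ x i < ((k i : ℝ) + 1) / 2 ^ j}

/-- The index of the dyadic cube of side `2^{-j}` containing `x`. -/
noncomputable def dyIdx (d j : ℕ) (x : Fin d → ℝ) : Fin d → ℤ := fun i => ⌊x i * 2 ^ j⌋

/-- The dyadic support of `μ`: points all of whose dyadic cubes have positive measure. -/
def dySupp (d : ℕ) (μ : Measure (Fin d → ℝ)) : Set (Fin d → ℝ) :=
  {x | ∀ j : ℕ, 0 < μ (dyCube d j (dyIdx d j x))}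

/-- `μ` is `(σ; T)`-regular (with `ℓ` levels): for every dyadic cube `Q` of side `2^{-jT}`
(`1 ≤ j ≤ ℓ`) of positive measure, `μ(Q) ≤ 2^{-Tσ_j} μ(Q̂) ≤ 2 μ(Q)`, where `Q̂` is the
parent cube of side `2^{-(j-1)T}`. -/
def IsRegularMeasure (d T ℓ : ℕ) (σ : ℕ → ℝ) (μ : Measure (Fin d → ℝ)) : Prop :=
  ∀ j : ℕ, 1 ≤ j → j ≤ ℓ → ∀ k : Fin d → ℤ, 0 < μ (dyCube d (j * T) k) →
    μ (dyCube d (j * T) k) ≤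
      ENNReal.ofReal ((2 : ℝ) ^ (-(T : ℝ) * σ j)) *
        μ (dyCube d ((j - 1) * T) (fun i => Int.fdiv (k i) (2 ^ T))) ∧
    ENNReal.ofReal ((2 : ℝ) ^ (-(T : ℝ) * σ j)) *
        μ (dyCube d ((j - 1) * T) (fun i => Int.fdiv (k i) (2 ^ T))) ≤
      2 * μ (dyCube d (j * T) k)


variable {d : ℕ}

theorem mem_dyCube_iff {j : ℕ} {k : Fin d → ℤ} {x : Fin d → ℝ} :
    x ∈ dyCube d j k ↔ dyIdx d j x = k := by
  have h2 : (0 : ℝ) < 2 ^ j := by positivity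
  simp only [dyCube, dyIdx, Set.mem_ofPred_eq, funext_iff, Int.floor_eq_iff, div_le_iff₀ h2,
    lt_div_iff₀ h2]

theorem mem_dyCube_dyIdx (j : ℕ) (x : Fin d → ℝ) : x ∈ dyCube d j (dyIdx d j x) :=
  mem_dyCube_iff.2 rfl

theorem dyCube_nonempty (j : ℕ) (k : Fin d → ℤ) : (dyCube d j k).Nonempty :=
  ⟨fun i => k i / 2 ^ j, mem_dyCube_iff.2 <| funext fun i => by simp [dyIdx]⟩

theorem pairwise_disjoint_dyCube (j : ℕ) : Pairwise (Function.onFun Disjoint (dyCube d j)) :=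
  fun _ _ hne => Set.disjoint_left.2 fun _ hx hx' =>
    hne ((mem_dyCube_iff.1 hx).symm.trans (mem_dyCube_iff.1 hx'))

theorem iUnion_dyCube (j : ℕ) : ⋃ k, dyCube d j k = Set.univ :=
  Set.eq_univ_of_forall fun x => Set.mem_iUnion.2 ⟨_, mem_dyCube_dyIdx j x⟩

theorem dyCube_eq_pi (j : ℕ) (k : Fin d → ℤ) :
    dyCube d j k = Set.univ.pi fun i => Set.Ico ((k i : ℝ) / 2 ^ j) ((k i + 1) / 2 ^ j) := by
  ext x
  simp [dyCube]

theorem measurableSet_dyCube (j : ℕ) (k : Fin d → ℤ) : MeasurableSet (dyCube d j k) := by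
  rw [dyCube_eq_pi]
  exact .univ_pi fun _ => measurableSet_Ico

theorem volume_dyCube (j : ℕ) (k : Fin d → ℤ) :
    volume (dyCube d j k) = ENNReal.ofReal ((2 : ℝ) ^ j)⁻¹ ^ d := by
  simp [dyCube_eq_pi, volume_pi_pi, Real.volume_Ico, add_div]

theorem volume_dyCube_ne_zero (j : ℕ) (k : Fin d → ℤ) : volume (dyCube d j k) ≠ 0 := by
  rw [volume_dyCube]
  exact pow_ne_zero d (ENNReal.ofReal_pos.2 (by positivity)).ne'

theorem volume_dyCube_ne_top (j : ℕ) (k : Fin d → ℤ) : volume (dyCube d j k) ≠ ∞ := by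
  rw [volume_dyCube]
  exact pow_ne_top ENNReal.ofReal_ne_top

theorem floor_mul_two_pow_fdiv (r : ℝ) (b : ℕ) : ⌊r * 2 ^ b⌋.fdiv (2 ^ b) = ⌊r⌋ := by
  have h := Int.floor_div_natCast (r * 2 ^ b) (2 ^ b)
  push_cast at h
  rw [mul_div_cancel_right₀ _ (by positivity)] at h
  rw [Int.fdiv_eq_ediv_of_nonneg _ (by positivity), h]

theorem dyIdx_apply_eq_fdiv (a b : ℕ) (x : Fin d → ℝ) (i : Fin d) :
    dyIdx d a x i = (dyIdx d (a + b) x i).fdiv (2 ^ b) := by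
  rw [dyIdx, dyIdx, pow_add, ← mul_assoc, floor_mul_two_pow_fdiv]

theorem dyCube_subset_dyCube_fdiv (a b : ℕ) (k : Fin d → ℤ) :
    dyCube d (a + b) k ⊆ dyCube d a (fun i => (k i).fdiv (2 ^ b)) := fun x hx => by
  rw [mem_dyCube_iff, ← mem_dyCube_iff.1 hx]
  exact funext (dyIdx_apply_eq_fdiv a b x)

theorem dyCube_dyIdx_subset {j j' : ℕ} (h : j ≤ j') (x : Fin d → ℝ) :
    dyCube d j' (dyIdx d j' x) ⊆ dyCube d j (dyIdx d j x) := by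
  obtain ⟨b, rfl⟩ := Nat.exists_eq_add_of_le h
  convert dyCube_subset_dyCube_fdiv j b (dyIdx d (j + b) x) using 2
  exact funext (dyIdx_apply_eq_fdiv j b x)

theorem measure_inter_biUnion_dyCube (ν : Measure (Fin d → ℝ)) {S : Set (Fin d → ℝ)}
    (hS : MeasurableSet S) (j : ℕ) (s : Finset (Fin d → ℤ)) :
    ν (S ∩ ⋃ k ∈ s, dyCube d j k) = ∑ k ∈ s, ν (S ∩ dyCube d j k) := by
  rw [Set.inter_iUnion₂]
  exact measure_biUnion_finset
    (fun k _ k' _ hne => ((pairwise_disjoint_dyCube j hne).mono Set.inter_subset_right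
      Set.inter_subset_right))
    fun k _ => hS.inter (measurableSet_dyCube j k)

theorem measure_eq_tsum_dyCube (ν : Measure (Fin d → ℝ)) {S : Set (Fin d → ℝ)}
    (hS : MeasurableSet S) (j : ℕ) : ν S = ∑' k, ν (S ∩ dyCube d j k) := by
  conv_lhs => rw [← Set.inter_univ S, ← iUnion_dyCube j, Set.inter_iUnion]
  exact measure_iUnion
    (fun k k' hne => ((pairwise_disjoint_dyCube j hne).mono Set.inter_subset_right
      Set.inter_subset_right))
    fun k => hS.inter (measurableSet_dyCube j k)

theorem mem_dyCube_zero_zero {x : Fin d → ℝ} :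
    x ∈ dyCube d 0 0 ↔ ∀ i, 0 ≤ x i ∧ x i < 1 := by
  simp [dyCube]

theorem dyIdx_mem_piFinset {x : Fin d → ℝ} (hx : x ∈ dyCube d 0 0) (j : ℕ) :
    dyIdx d j x ∈ Fintype.piFinset fun _ => Finset.Ico (0 : ℤ) (2 ^ j) := by
  simp only [Fintype.mem_piFinset, Finset.mem_Ico, dyIdx]
  intro i
  obtain ⟨h0, h1⟩ := mem_dyCube_zero_zero.1 hx i
  refine ⟨Int.floor_nonneg.2 (by positivity), Int.floor_lt.2 ?_⟩
  push_cast
  nlinarith [pow_pos (two_pos : (0 : ℝ) < 2) j]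

/-- The indices of the dyadic cubes of side `2^{-j}` of positive `μ`-measure, searched among the
cubes of `[0,1)^d` so that they form a `Finset`. -/
noncomputable def dyPos (d j : ℕ) (μ : Measure (Fin d → ℝ)) : Finset (Fin d → ℤ) :=
  open Classical in
  (Fintype.piFinset fun _ => Finset.Ico (0 : ℤ) (2 ^ j)).filter fun k => 0 < μ (dyCube d j k)

section UnitCube

variable {μ : Measure (Fin d → ℝ)}

theorem mem_piFinset_of_measure_dyCube_pos (hμ : μ (dyCube d 0 0)ᶜ = 0) {j : ℕ}
    {k : Fin d → ℤ} (hk : 0 < μ (dyCube d j k)) :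
    k ∈ Fintype.piFinset fun _ => Finset.Ico (0 : ℤ) (2 ^ j) := by
  rw [← measure_inter_conull hμ] at hk
  obtain ⟨x, hxk, hx⟩ := nonempty_of_measure_ne_zero hk.ne'
  exact mem_dyCube_iff.1 hxk ▸ dyIdx_mem_piFinset hx j

theorem measure_dyCube_zero_eq_one [IsProbabilityMeasure μ] (hμ : μ (dyCube d 0 0)ᶜ = 0)
    {k : Fin d → ℤ} (hk : 0 < μ (dyCube d 0 k)) : μ (dyCube d 0 k) = 1 := by
  have hk0 : k = 0 := funext fun i => by
    have := Fintype.mem_piFinset.1 (mem_piFinset_of_measure_dyCube_pos hμ hk) i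
    simp only [pow_zero, Finset.mem_Ico] at this
    simp only [Pi.zero_apply]
    omega
  subst hk0
  exact (prob_compl_eq_zero_iff (measurableSet_dyCube 0 0)).1 hμ

theorem mem_dyPos (hμ : μ (dyCube d 0 0)ᶜ = 0) {j : ℕ} {k : Fin d → ℤ} :
    k ∈ dyPos d j μ ↔ 0 < μ (dyCube d j k) := by
  classical
  rw [dyPos, Finset.mem_filter]
  exact ⟨And.right, fun hk => ⟨mem_piFinset_of_measure_dyCube_pos hμ hk, hk⟩⟩

theorem measure_eq_sum_dyPos (hμ : μ (dyCube d 0 0)ᶜ = 0) {S : Set (Fin d → ℝ)}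
    (hS : MeasurableSet S) (j : ℕ) : μ S = ∑ k ∈ dyPos d j μ, μ (S ∩ dyCube d j k) := by
  rw [measure_eq_tsum_dyCube μ hS j]
  refine tsum_eq_sum fun k hk => measure_mono_null Set.inter_subset_right ?_
  simpa [mem_dyPos hμ] using hk

theorem sum_dyPos_eq_one [IsProbabilityMeasure μ] (hμ : μ (dyCube d 0 0)ᶜ = 0) (j : ℕ) :
    ∑ k ∈ dyPos d j μ, μ (dyCube d j k) = 1 := by
  simpa using (measure_eq_sum_dyPos hμ MeasurableSet.univ j).symm

end UnitCube

theorem two_rpow_neg_mul_sum_Icc_succ (T : ℕ) (σ : ℕ → ℝ) (j : ℕ) :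
    (2 : ℝ) ^ (-(T : ℝ) * ∑ i ∈ Finset.Icc 1 (j + 1), σ i) =
      (2 : ℝ) ^ (-(T : ℝ) * σ (j + 1)) * (2 : ℝ) ^ (-(T : ℝ) * ∑ i ∈ Finset.Icc 1 j, σ i) := by
  rw [Finset.sum_Icc_succ_top (Nat.le_add_left 1 j), ← Real.rpow_add two_pos]
  ring_nf

theorem dyCube_succ_mul_subset (j T : ℕ) (k : Fin d → ℤ) :
    dyCube d ((j + 1) * T) k ⊆ dyCube d (j * T) (fun i => (k i).fdiv (2 ^ T)) := by
  rw [Nat.succ_mul]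
  exact dyCube_subset_dyCube_fdiv _ _ k

theorem ofReal_two_rpow_neg_natCast (n : ℕ) :
    ENNReal.ofReal ((2 : ℝ) ^ (-(n : ℝ))) = ((2 : ℝ≥0∞) ^ n)⁻¹ := by
  rw [Real.rpow_neg two_pos.le, Real.rpow_natCast, ENNReal.ofReal_inv_of_pos (by positivity),
    ENNReal.ofReal_pow zero_le_two, ENNReal.ofReal_ofNat]

section Regular

variable {T ℓ : ℕ} {σ : ℕ → ℝ} {μ : Measure (Fin d → ℝ)}

theorem IsRegularMeasure.measure_dyCube_le [IsProbabilityMeasure μ]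
    (hreg : IsRegularMeasure d T ℓ σ μ) {j : ℕ} (hj : j ≤ ℓ) {k : Fin d → ℤ}
    (hk : 0 < μ (dyCube d (j * T) k)) :
    μ (dyCube d (j * T) k) ≤ ENNReal.ofReal ((2 : ℝ) ^ (-(T : ℝ) * ∑ i ∈ Finset.Icc 1 j, σ i)) := by
  induction j generalizing k with
  | zero => simpa using prob_le_one
  | succ j ih =>
    obtain ⟨hup, -⟩ := hreg (j + 1) (by omega) hj k hk
    rw [Nat.add_sub_cancel] at hup
    have hparent := hk.trans_le (measure_mono (dyCube_succ_mul_subset j T k))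
    calc μ (dyCube d ((j + 1) * T) k)
        ≤ ENNReal.ofReal ((2 : ℝ) ^ (-(T : ℝ) * σ (j + 1))) *
            μ (dyCube d (j * T) (fun i => (k i).fdiv (2 ^ T))) := hup
      _ ≤ ENNReal.ofReal ((2 : ℝ) ^ (-(T : ℝ) * σ (j + 1))) *
            ENNReal.ofReal ((2 : ℝ) ^ (-(T : ℝ) * ∑ i ∈ Finset.Icc 1 j, σ i)) := by
        gcongr
        exact ih (by omega) hparent
      _ = _ := by rw [← ENNReal.ofReal_mul (by positivity), two_rpow_neg_mul_sum_Icc_succ]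

theorem IsRegularMeasure.le_measure_dyCube [IsProbabilityMeasure μ]
    (hμ : μ (dyCube d 0 0)ᶜ = 0) (hreg : IsRegularMeasure d T ℓ σ μ) {j : ℕ} (hj : j ≤ ℓ)
    {k : Fin d → ℤ} (hk : 0 < μ (dyCube d (j * T) k)) :
    ENNReal.ofReal ((2 : ℝ) ^ (-(j : ℝ)) * (2 : ℝ) ^ (-(T : ℝ) * ∑ i ∈ Finset.Icc 1 j, σ i)) ≤
      μ (dyCube d (j * T) k) := by
  induction j generalizing k with
  | zero =>
    rw [zero_mul] at hk ⊢
    simp [measure_dyCube_zero_eq_one hμ hk]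
  | succ j ih =>
    obtain ⟨-, hlow⟩ := hreg (j + 1) (by omega) hj k hk
    rw [Nat.add_sub_cancel] at hlow
    have hparent := hk.trans_le (measure_mono (dyCube_succ_mul_subset j T k))
    have hscale : (2 : ℝ) ^ (-((j + 1 : ℕ) : ℝ)) *
          (2 : ℝ) ^ (-(T : ℝ) * ∑ i ∈ Finset.Icc 1 (j + 1), σ i) =
        2⁻¹ * ((2 : ℝ) ^ (-(T : ℝ) * σ (j + 1)) *
          ((2 : ℝ) ^ (-(j : ℝ)) * (2 : ℝ) ^ (-(T : ℝ) * ∑ i ∈ Finset.Icc 1 j, σ i))) := by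
      rw [two_rpow_neg_mul_sum_Icc_succ, Real.rpow_neg two_pos.le, Real.rpow_neg two_pos.le,
        Real.rpow_natCast, Real.rpow_natCast, pow_succ]
      ring
    calc ENNReal.ofReal ((2 : ℝ) ^ (-((j + 1 : ℕ) : ℝ)) *
          (2 : ℝ) ^ (-(T : ℝ) * ∑ i ∈ Finset.Icc 1 (j + 1), σ i))
        = 2⁻¹ * (ENNReal.ofReal ((2 : ℝ) ^ (-(T : ℝ) * σ (j + 1))) *
            ENNReal.ofReal ((2 : ℝ) ^ (-(j : ℝ)) *
              (2 : ℝ) ^ (-(T : ℝ) * ∑ i ∈ Finset.Icc 1 j, σ i))) := by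
          rw [hscale, ENNReal.ofReal_mul (by positivity), ENNReal.ofReal_mul (by positivity),
            ENNReal.ofReal_inv_of_pos two_pos, ENNReal.ofReal_ofNat]
      _ ≤ 2⁻¹ * (ENNReal.ofReal ((2 : ℝ) ^ (-(T : ℝ) * σ (j + 1))) *
            μ (dyCube d (j * T) (fun i => (k i).fdiv (2 ^ T)))) := by
        gcongr
        exact ih (by omega) hparent
      _ ≤ 2⁻¹ * (2 * μ (dyCube d ((j + 1) * T) k)) := by gcongr
      _ = μ (dyCube d ((j + 1) * T) k) := ENNReal.inv_mul_cancel_left two_ne_zero ofNat_ne_top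

theorem IsRegularMeasure.measure_dyCube_mem_Icc_of_mem_dyPos [IsProbabilityMeasure μ]
    (hμ : μ (dyCube d 0 0)ᶜ = 0) (hreg : IsRegularMeasure d T ℓ σ μ) {k : Fin d → ℤ}
    (hk : k ∈ dyPos d (T * ℓ) μ) :
    ((2 : ℝ≥0∞) ^ ℓ)⁻¹ * ENNReal.ofReal ((2 : ℝ) ^ (-(T : ℝ) * ∑ i ∈ Finset.Icc 1 ℓ, σ i)) ≤
        μ (dyCube d (T * ℓ) k) ∧
      μ (dyCube d (T * ℓ) k) ≤
        ENNReal.ofReal ((2 : ℝ) ^ (-(T : ℝ) * ∑ i ∈ Finset.Icc 1 ℓ, σ i)) := by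
  rw [mem_dyPos hμ, mul_comm] at hk
  rw [mul_comm T, ← ofReal_two_rpow_neg_natCast, ← ENNReal.ofReal_mul (by positivity)]
  exact ⟨hreg.le_measure_dyCube hμ le_rfl hk, hreg.measure_dyCube_le le_rfl hk⟩

end Regular

theorem measure_inter_eq_mul_of_restrict_eq_smul {α : Type*} [MeasurableSpace α]
    {μ ν : Measure α} {Q S : Set α} {c : ℝ≥0∞} (h : μ.restrict Q = c • ν.restrict Q)
    (hS : MeasurableSet S) : μ (S ∩ Q) = c * ν (S ∩ Q) := by
  simpa [Measure.restrict_apply hS] using congrArg (· S) h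

def IsUniformOnDyCubes (d m : ℕ) (μ : Measure (Fin d → ℝ)) : Prop :=
  ∀ k : Fin d → ℤ, ∃ c : ℝ≥0∞, μ.restrict (dyCube d m k) = c • volume.restrict (dyCube d m k)

section Uniform

variable {m : ℕ} {μ : Measure (Fin d → ℝ)}

theorem IsUniformOnDyCubes.mem_dySupp_iff (hflat : IsUniformOnDyCubes d m μ)
    {x : Fin d → ℝ} : x ∈ dySupp d μ ↔ 0 < μ (dyCube d m (dyIdx d m x)) := by
  refine ⟨fun hx => hx m, fun hx j => ?_⟩
  rcases le_total j m with hj | hj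
  · exact hx.trans_le (measure_mono (dyCube_dyIdx_subset hj x))
  · obtain ⟨c, hc⟩ := hflat (dyIdx d m x)
    have hsmall :=
      measure_inter_eq_mul_of_restrict_eq_smul hc (measurableSet_dyCube j (dyIdx d j x))
    have hbig := measure_inter_eq_mul_of_restrict_eq_smul hc (measurableSet_dyCube m (dyIdx d m x))
    rw [Set.inter_eq_self_of_subset_left (dyCube_dyIdx_subset hj x)] at hsmall
    rw [Set.inter_self] at hbig
    rw [hbig] at hx
    rw [hsmall]
    exact ENNReal.mul_pos (left_ne_zero_of_mul hx.ne') (volume_dyCube_ne_zero _ _)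

theorem IsUniformOnDyCubes.dySupp_eq_biUnion (hμ : μ (dyCube d 0 0)ᶜ = 0)
    (hflat : IsUniformOnDyCubes d m μ) : dySupp d μ = ⋃ k ∈ dyPos d m μ, dyCube d m k := by
  ext x
  simp only [Set.mem_iUnion₂, exists_prop, hflat.mem_dySupp_iff, mem_dyPos hμ]
  exact ⟨fun hx => ⟨_, hx, mem_dyCube_dyIdx m x⟩, fun ⟨k, hk, hxk⟩ => mem_dyCube_iff.1 hxk ▸ hk⟩

theorem IsUniformOnDyCubes.setOf_dyCube_inter_dySupp_nonempty (hμ : μ (dyCube d 0 0)ᶜ = 0)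
    (hflat : IsUniformOnDyCubes d m μ) :
    {k : Fin d → ℤ | (dyCube d m k ∩ dySupp d μ).Nonempty} = dyPos d m μ := by
  ext k
  rw [Finset.mem_coe, mem_dyPos hμ]
  constructor
  · rintro ⟨x, hxk, hx⟩
    rwa [hflat.mem_dySupp_iff, mem_dyCube_iff.1 hxk] at hx
  · intro hk
    obtain ⟨x, hxk⟩ := dyCube_nonempty m k
    exact ⟨x, hxk, hflat.mem_dySupp_iff.2 (mem_dyCube_iff.1 hxk ▸ hk)⟩

theorem IsUniformOnDyCubes.volume_dySupp (hμ : μ (dyCube d 0 0)ᶜ = 0)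
    (hflat : IsUniformOnDyCubes d m μ) :
    volume (dySupp d μ) = (dyPos d m μ).card * volume (dyCube d m 0) := by
  rw [hflat.dySupp_eq_biUnion hμ, ← Set.univ_inter (⋃ k ∈ _, _),
    measure_inter_biUnion_dyCube volume .univ]
  simp [volume_dyCube]

end Uniform

section Counting

variable {ι R : Type*} [Semiring R] [PartialOrder R] [IsOrderedRing R] {s : Finset ι} {f : ι → R}

theorem card_mul_le_one_of_sum_eq_one (hs : ∑ i ∈ s, f i = 1) {a : R} (ha : ∀ i ∈ s, a ≤ f i) :
    s.card * a ≤ 1 := by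
  simpa [hs, nsmul_eq_mul] using s.card_nsmul_le_sum f a ha

theorem one_le_card_mul_of_sum_eq_one (hs : ∑ i ∈ s, f i = 1) {A : R} (hA : ∀ i ∈ s, f i ≤ A) :
    1 ≤ s.card * A := by
  simpa [hs, nsmul_eq_mul] using s.sum_le_card_nsmul f A hA

end Counting

theorem card_mul_mem_Icc_of_sum_eq_one {ι : Type*} {s : Finset ι} {f : ι → ℝ≥0∞}
    (hs : ∑ i ∈ s, f i = 1) {A r : ℝ≥0∞} (hr0 : r ≠ 0) (hrt : r ≠ ∞)
    (hf : ∀ i ∈ s, r⁻¹ * A ≤ f i ∧ f i ≤ A) {i : ι} (hi : i ∈ s) :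
    r⁻¹ ≤ s.card * f i ∧ s.card * f i ≤ r := by
  have hlow := card_mul_le_one_of_sum_eq_one hs fun i hi => (hf i hi).1
  have hup := one_le_card_mul_of_sum_eq_one hs fun i hi => (hf i hi).2
  constructor
  · calc r⁻¹ ≤ r⁻¹ * (s.card * A) := le_mul_of_one_le_right' hup
      _ = s.card * (r⁻¹ * A) := by ring
      _ ≤ s.card * f i := by gcongr; exact (hf i hi).1
  · calc s.card * f i ≤ s.card * A := by gcongr; exact (hf i hi).2
      _ = r * (s.card * (r⁻¹ * A)) := by
        rw [mul_left_comm, ← mul_assoc r, ENNReal.mul_inv_cancel hr0 hrt, one_mul]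
      _ ≤ r := mul_le_of_le_one_right' hlow

theorem IsUniformOnDyCubes.inv_mul_measure_le_and_le_mul_measure {m : ℕ}
    {μ : Measure (Fin d → ℝ)} [IsProbabilityMeasure μ] (hμ : μ (dyCube d 0 0)ᶜ = 0)
    (hflat : IsUniformOnDyCubes d m μ) {r : ℝ≥0∞} (hr0 : r ≠ 0) (hrt : r ≠ ∞)
    (hr : ∀ k ∈ dyPos d m μ, r⁻¹ ≤ (dyPos d m μ).card * μ (dyCube d m k) ∧
      (dyPos d m μ).card * μ (dyCube d m k) ≤ r)
    {S : Set (Fin d → ℝ)} (hS : MeasurableSet S) :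
    r⁻¹ * μ S ≤ (volume (dySupp d μ))⁻¹ * volume (S ∩ dySupp d μ) ∧
      (volume (dySupp d μ))⁻¹ * volume (S ∩ dySupp d μ) ≤ r * μ S := by
  set P := dyPos d m μ
  set V := volume (dySupp d μ)
  have hP : P.Nonempty := Finset.nonempty_of_sum_ne_zero (f := fun k => μ (dyCube d m k))
    (by rw [sum_dyPos_eq_one hμ m]; exact one_ne_zero)
  have hV : V = P.card * volume (dyCube d m 0) := hflat.volume_dySupp hμ
  have hV0 : V ≠ 0 := by
    rw [hV]
    exact mul_ne_zero (Nat.cast_ne_zero.2 hP.card_pos.ne') (volume_dyCube_ne_zero m 0)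
  have hVt : V ≠ ∞ := by
    rw [hV]
    exact ENNReal.mul_ne_top (ENNReal.natCast_ne_top _) (volume_dyCube_ne_top m 0)
  have hcube : ∀ k ∈ P, μ (S ∩ dyCube d m k) =
      (P.card * μ (dyCube d m k)) * (V⁻¹ * volume (S ∩ dyCube d m k)) := by
    intro k _
    obtain ⟨c, hc⟩ := hflat k
    have hQ := measure_inter_eq_mul_of_restrict_eq_smul hc (measurableSet_dyCube m k)
    rw [Set.inter_self, volume_dyCube, ← volume_dyCube m 0] at hQ
    rw [measure_inter_eq_mul_of_restrict_eq_smul hc hS, hQ]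
    calc c * volume (S ∩ dyCube d m k) = c * volume (S ∩ dyCube d m k) * (V * V⁻¹) := by
          rw [ENNReal.mul_inv_cancel hV0 hVt, mul_one]
      _ = _ := by rw [hV]; ring
  have hμS : μ S = ∑ k ∈ P, (P.card * μ (dyCube d m k)) * (V⁻¹ * volume (S ∩ dyCube d m k)) :=
    (measure_eq_sum_dyPos hμ hS m).trans (Finset.sum_congr rfl hcube)
  have hvolS : V⁻¹ * volume (S ∩ dySupp d μ) = ∑ k ∈ P, V⁻¹ * volume (S ∩ dyCube d m k) := by
    rw [hflat.dySupp_eq_biUnion hμ, measure_inter_biUnion_dyCube volume hS, Finset.mul_sum]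
  rw [hμS, hvolS, Finset.mul_sum, Finset.mul_sum]
  constructor
  · refine Finset.sum_le_sum fun k hk => ?_
    calc r⁻¹ * ((P.card * μ (dyCube d m k)) * (V⁻¹ * volume (S ∩ dyCube d m k)))
        ≤ r⁻¹ * (r * (V⁻¹ * volume (S ∩ dyCube d m k))) := by gcongr; exact (hr k hk).2
      _ = V⁻¹ * volume (S ∩ dyCube d m k) := ENNReal.inv_mul_cancel_left hr0 hrt
  · refine Finset.sum_le_sum fun k hk => ?_
    calc V⁻¹ * volume (S ∩ dyCube d m k)
        = r * (r⁻¹ * (V⁻¹ * volume (S ∩ dyCube d m k))) :=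
          (ENNReal.mul_inv_cancel_left hr0 hrt).symm
      _ ≤ r * ((P.card * μ (dyCube d m k)) * (V⁻¹ * volume (S ∩ dyCube d m k))) := by
        gcongr; exact (hr k hk).1

theorem two_rpow_le_of_one_le_mul_two_rpow_neg {N x : ℝ} (h : 1 ≤ N * 2 ^ (-x)) :
    2 ^ x ≤ N := by
  rwa [Real.rpow_neg two_pos.le, ← div_eq_mul_inv, one_le_div (by positivity)] at h

theorem le_two_rpow_of_mul_two_rpow_neg_le_one {N x : ℝ} (h : N * 2 ^ (-x) ≤ 1) :
    N ≤ 2 ^ x := by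
  rwa [Real.rpow_neg two_pos.le, ← div_eq_mul_inv, div_le_one (by positivity)] at h

theorem IsRegularMeasure.card_dyPos_mem_Icc {T ℓ : ℕ} (hT : 1 ≤ T) (hℓ : 1 ≤ ℓ) {σ : ℕ → ℝ}
    {μ : Measure (Fin d → ℝ)} [IsProbabilityMeasure μ] (hμ : μ (dyCube d 0 0)ᶜ = 0)
    (hreg : IsRegularMeasure d T ℓ σ μ) :
    (2 : ℝ) ^ (((∑ i ∈ Finset.Icc 1 ℓ, σ i) / ℓ) * (T * ℓ : ℕ)) ≤ (dyPos d (T * ℓ) μ).card ∧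
      ((dyPos d (T * ℓ) μ).card : ℝ) ≤
        (2 : ℝ) ^ (((∑ i ∈ Finset.Icc 1 ℓ, σ i) / ℓ + 1 / (T : ℝ)) * (T * ℓ : ℕ)) := by
  have hsum := sum_dyPos_eq_one hμ (T * ℓ)
  have hbounds := fun k (hk : k ∈ dyPos d (T * ℓ) μ) =>
    hreg.measure_dyCube_mem_Icc_of_mem_dyPos hμ hk
  have hlower := one_le_card_mul_of_sum_eq_one hsum fun k hk => (hbounds k hk).2
  have hupper := card_mul_le_one_of_sum_eq_one hsum fun k hk => (hbounds k hk).1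
  rw [← ENNReal.ofReal_natCast, ← ENNReal.ofReal_mul (by positivity),
    ENNReal.one_le_ofReal] at hlower
  rw [← ofReal_two_rpow_neg_natCast, ← ENNReal.ofReal_mul (by positivity),
    ← ENNReal.ofReal_natCast, ← ENNReal.ofReal_mul (by positivity),
    ENNReal.ofReal_le_one, ← Real.rpow_add two_pos] at hupper
  have hℓ0 : (ℓ : ℝ) ≠ 0 := by positivity
  have hT0 : (T : ℝ) ≠ 0 := by positivity
  refine ⟨two_rpow_le_of_one_le_mul_two_rpow_neg ?_, le_two_rpow_of_mul_two_rpow_neg_le_one ?_⟩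
  · convert hlower using 3
    push_cast
    field_simp
  · convert hupper using 3
    push_cast
    field_simp
    ring

theorem regular_measure_properties_general (d T ℓ : ℕ) (hT : 1 ≤ T) (hℓ : 1 ≤ ℓ)
    (σ : ℕ → ℝ)
    (μ : Measure (Fin d → ℝ)) [IsProbabilityMeasure μ]
    (hμbox : μ {x | ¬ ∀ i, 0 ≤ x i ∧ x i < 1} = 0)
    (hμflat : ∀ k : Fin d → ℤ, ∃ c : ℝ≥0∞,
      μ.restrict (dyCube d (T * ℓ) k) = c • volume.restrict (dyCube d (T * ℓ) k))
    (hreg : IsRegularMeasure d T ℓ σ μ) :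
    -- (i)
    (∀ j : ℕ, 1 ≤ j → j ≤ ℓ → ∀ k : Fin d → ℤ, 0 < μ (dyCube d (j * T) k) →
      ENNReal.ofReal ((2 : ℝ) ^ (-(j : ℝ)) *
          (2 : ℝ) ^ (-(T : ℝ) * ∑ i ∈ Finset.Icc 1 j, σ i)) ≤ μ (dyCube d (j * T) k) ∧
      μ (dyCube d (j * T) k) ≤
        ENNReal.ofReal ((2 : ℝ) ^ (-(T : ℝ) * ∑ i ∈ Finset.Icc 1 j, σ i))) ∧
    -- (ii)
    ({k : Fin d → ℤ | (dyCube d (T * ℓ) k ∩ dySupp d μ).Nonempty}.Finite ∧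
      (2 : ℝ) ^ (((∑ i ∈ Finset.Icc 1 ℓ, σ i) / ℓ) * (T * ℓ : ℕ)) ≤
        ({k : Fin d → ℤ | (dyCube d (T * ℓ) k ∩ dySupp d μ).Nonempty}.ncard : ℝ) ∧
      (({k : Fin d → ℤ | (dyCube d (T * ℓ) k ∩ dySupp d μ).Nonempty}.ncard : ℝ)) ≤
        (2 : ℝ) ^ (((∑ i ∈ Finset.Icc 1 ℓ, σ i) / ℓ + 1 / (T : ℝ)) * (T * ℓ : ℕ))) ∧
    -- (iii)
    (∀ S : Set (Fin d → ℝ), MeasurableSet S →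
      ((2 : ℝ≥0∞) ^ ℓ)⁻¹ * μ S ≤ (volume (dySupp d μ))⁻¹ * volume (S ∩ dySupp d μ) ∧
      (volume (dySupp d μ))⁻¹ * volume (S ∩ dySupp d μ) ≤ (2 : ℝ≥0∞) ^ ℓ * μ S) := by
  have hμ : μ (dyCube d 0 0)ᶜ = 0 := by
    convert hμbox using 2
    ext x
    simp [mem_dyCube_zero_zero]
  have hflat : IsUniformOnDyCubes d (T * ℓ) μ := hμflat
  have hr0 : (2 : ℝ≥0∞) ^ ℓ ≠ 0 := pow_ne_zero _ two_ne_zero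
  have hrt : (2 : ℝ≥0∞) ^ ℓ ≠ ∞ := pow_ne_top ofNat_ne_top
  refine ⟨fun j _ hj k hk => ⟨hreg.le_measure_dyCube hμ hj hk, hreg.measure_dyCube_le hj hk⟩,
    ?_, fun S hS => hflat.inv_mul_measure_le_and_le_mul_measure hμ hr0 hrt
      (fun k hk => card_mul_mem_Icc_of_sum_eq_one (sum_dyPos_eq_one hμ (T * ℓ)) hr0 hrt
        (fun k hk => hreg.measure_dyCube_mem_Icc_of_mem_dyPos hμ hk) hk) hS⟩
  rw [hflat.setOf_dyCube_inter_dySupp_nonempty hμ, Set.ncard_coe_finset]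
  exact ⟨(dyPos d (T * ℓ) μ).finite_toSet, hreg.card_dyPos_mem_Icc hT hℓ hμ⟩

/-- properties of regular measures. Let `μ` be a `(σ;T)`-regular
`2^{-m}`-measure on `[0,1)^d` with dyadic support `X`, where `m = Tℓ`. Then:
(i) cubes of side `2^{-jT}` of positive measure have measure comparable to
`2^{-T(σ_1+⋯+σ_j)}`; (ii) the number of `2^{-m}`-cubes meeting `X` is between `2^{βm}` and
`2^{(β+1/T)m}` where `β = (σ_1+⋯+σ_ℓ)/ℓ`; (iii) `2^{-ℓ} μ ≤ 1_X/|X| ≤ 2^{ℓ} μ`. -/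
theorem regular_measure_properties (d T ℓ : ℕ) (hd : 1 ≤ d) (hT : 1 ≤ T) (hℓ : 1 ≤ ℓ)
    (σ : ℕ → ℝ) (hσ : ∀ j, 1 ≤ j → j ≤ ℓ → 0 ≤ σ j ∧ σ j ≤ d)
    (μ : Measure (Fin d → ℝ)) [IsProbabilityMeasure μ]
    (hμbox : μ {x | ¬ ∀ i, 0 ≤ x i ∧ x i < 1} = 0)
    (hμflat : ∀ k : Fin d → ℤ, ∃ c : ℝ≥0∞,
      μ.restrict (dyCube d (T * ℓ) k) = c • volume.restrict (dyCube d (T * ℓ) k))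
    (hreg : IsRegularMeasure d T ℓ σ μ) :
    -- (i)
    (∀ j : ℕ, 1 ≤ j → j ≤ ℓ → ∀ k : Fin d → ℤ, 0 < μ (dyCube d (j * T) k) →
      ENNReal.ofReal ((2 : ℝ) ^ (-(j : ℝ)) *
          (2 : ℝ) ^ (-(T : ℝ) * ∑ i ∈ Finset.Icc 1 j, σ i)) ≤ μ (dyCube d (j * T) k) ∧
      μ (dyCube d (j * T) k) ≤
        ENNReal.ofReal ((2 : ℝ) ^ (-(T : ℝ) * ∑ i ∈ Finset.Icc 1 j, σ i))) ∧
    -- (ii)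
    ({k : Fin d → ℤ | (dyCube d (T * ℓ) k ∩ dySupp d μ).Nonempty}.Finite ∧
      (2 : ℝ) ^ (((∑ i ∈ Finset.Icc 1 ℓ, σ i) / ℓ) * (T * ℓ : ℕ)) ≤
        ({k : Fin d → ℤ | (dyCube d (T * ℓ) k ∩ dySupp d μ).Nonempty}.ncard : ℝ) ∧
      (({k : Fin d → ℤ | (dyCube d (T * ℓ) k ∩ dySupp d μ).Nonempty}.ncard : ℝ)) ≤
        (2 : ℝ) ^ (((∑ i ∈ Finset.Icc 1 ℓ, σ i) / ℓ + 1 / (T : ℝ)) * (T * ℓ : ℕ))) ∧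
    -- (iii)
    (∀ S : Set (Fin d → ℝ), MeasurableSet S →
      ((2 : ℝ≥0∞) ^ ℓ)⁻¹ * μ S ≤ (volume (dySupp d μ))⁻¹ * volume (S ∩ dySupp d μ) ∧
      (volume (dySupp d μ))⁻¹ * volume (S ∩ dySupp d μ) ≤ (2 : ℝ≥0∞) ^ ℓ * μ S) :=
  regular_measure_properties_general d T ℓ hT hℓ σ μ hμbox hμflat hreg
end

section
/- Let μ be a Borel probability measure on a metric space, let G be a finite measurable partition and F, F' two finite partitions such that each element of F intersects at most N elements of F' and vice versa. Then |H(μ,F) − H(μ,F')| ≤ log₂ N, where H denotes Shannon entropy. -/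
open MeasureTheory Real

-- Jensen helper
lemma jensen_negMulLog {ι : Type*} (s : Finset ι) (p : ι → ℝ) (h0 : ∀ i ∈ s, 0 ≤ p i)
    (N : ℕ) (hc : s.card ≤ N) :
    ∑ i ∈ s, Real.negMulLog (p i) ≤
      Real.negMulLog (∑ i ∈ s, p i) + (∑ i ∈ s, p i) * Real.log N := by
  rcases s.eq_empty_or_nonempty with rfl | hs
  · simp
  have hn : 0 < s.card := hs.card_pos
  have hN : 0 < N := lt_of_lt_of_le hn hc
  set n : ℝ := (s.card : ℝ) with hndef
  have hnpos : (0:ℝ) < n := by rw [hndef]; exact_mod_cast hn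
  set m := ∑ i ∈ s, p i with hm
  have hm0 : 0 ≤ m := Finset.sum_nonneg h0
  have hj : ∑ i ∈ s, n⁻¹ • Real.negMulLog (p i) ≤
      Real.negMulLog (∑ i ∈ s, n⁻¹ • p i) := by
    refine Real.concaveOn_negMulLog.le_map_sum (fun i _ => by positivity) ?_
      (fun i hi => h0 i hi)
    simp [Finset.sum_const, hndef]
    field_simp
  have hsum : ∑ i ∈ s, n⁻¹ • p i = m / n := by
    simp only [smul_eq_mul, ← Finset.mul_sum, ← hm]; ring
  have hj2 : ∑ i ∈ s, Real.negMulLog (p i) ≤ n * Real.negMulLog (m / n) := by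
    have := hj
    rw [hsum] at this
    simp only [smul_eq_mul, ← Finset.mul_sum] at this
    calc ∑ i ∈ s, Real.negMulLog (p i) = n * (n⁻¹ * ∑ i ∈ s, Real.negMulLog (p i)) := by
          field_simp
      _ ≤ n * Real.negMulLog (m / n) := by
          apply mul_le_mul_of_nonneg_left this hnpos.le
  refine hj2.trans ?_
  rcases eq_or_lt_of_le hm0 with h | h
  · simp [← h, Real.negMulLog]
  · have hlog : Real.log (m / n) = Real.log m - Real.log n := Real.log_div h.ne' hnpos.ne'
    have hnN : Real.log n ≤ Real.log N := by
      apply Real.log_le_log hnpos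
      rw [hndef]; exact_mod_cast hc
    have heq : n * Real.negMulLog (m/n) = -m * Real.log m + m * Real.log n := by
      rw [Real.negMulLog, hlog]; field_simp; ring
    have : m * Real.log n ≤ m * Real.log N := mul_le_mul_of_nonneg_left hnN hm0
    rw [heq, Real.negMulLog]
    linarith

open Classical in
lemma measure_eq_sum_inter {X : Type*} [MeasurableSpace X] (μ : Measure X)
    [IsProbabilityMeasure μ] (P : Finset (Set X))
    (hmeas : ∀ B ∈ P, MeasurableSet B)
    (hdisj : ∀ B ∈ P, ∀ C ∈ P, B ≠ C → B ∩ C = ∅)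
    (hcov : μ (⋃ B ∈ P, B) = 1)
    (A : Set X) (hA : MeasurableSet A) :
    (μ A).toReal = ∑ B ∈ P, (μ (A ∩ B)).toReal := by
  set U := ⋃ B ∈ P, B with hU
  have hUm : MeasurableSet U := P.measurableSet_biUnion hmeas
  have hUc : μ Uᶜ = 0 := by
    rw [measure_compl hUm (measure_ne_top μ U), measure_univ, hcov, tsub_self]
  have h1 : μ (A \ U) = 0 :=
    measure_mono_null (fun x hx => hx.2) hUc
  have h2 : μ A = μ (A ∩ U) := by
    rw [← measure_inter_add_diff A hUm, h1, add_zero]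
  have h3 : A ∩ U = ⋃ B ∈ P, A ∩ B := by
    rw [hU, Set.inter_iUnion₂]
  have pd : (↑P : Set (Set X)).PairwiseDisjoint (fun B => A ∩ B) := by
    intro B hB C hC hne
    have h := hdisj B hB C hC hne
    have : Disjoint B C := Set.disjoint_iff_inter_eq_empty.2 h
    exact (this.mono Set.inter_subset_right Set.inter_subset_right)
  have h4 : μ (⋃ B ∈ P, A ∩ B) = ∑ B ∈ P, μ (A ∩ B) :=
    measure_biUnion_finset pd (fun B hB => hA.inter (hmeas B hB))
  rw [h2, h3, h4, ENNReal.toReal_sum (fun B _ => measure_ne_top μ _)]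

lemma negMulLog_le_sum {ι : Type*} (s : Finset ι) (b : ι → ℝ) (hb : ∀ i ∈ s, 0 ≤ b i)
    (a : ℝ) (ha : a = ∑ i ∈ s, b i) :
    Real.negMulLog a ≤ ∑ i ∈ s, Real.negMulLog (b i) := by
  have h1 : Real.negMulLog a = ∑ i ∈ s, b i * (-Real.log a) := by
    rw [← Finset.sum_mul, ← ha, Real.negMulLog]; ring
  rw [h1]
  apply Finset.sum_le_sum
  intro i hi
  rcases eq_or_lt_of_le (hb i hi) with h | h
  · simp [← h]
  · have hba : b i ≤ a := ha ▸ Finset.single_le_sum hb hi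
    have hl : Real.log (b i) ≤ Real.log a := Real.log_le_log h hba
    rw [Real.negMulLog]
    nlinarith

open Classical in
lemma entropy_le_entropy_add_log {X : Type*} [MeasurableSpace X] (μ : Measure X)
    [IsProbabilityMeasure μ] (P P' : Finset (Set X)) (N : ℕ)
    (hPmeas : ∀ A ∈ P, MeasurableSet A)
    (hPdisj : ∀ A ∈ P, ∀ B ∈ P, A ≠ B → A ∩ B = ∅)
    (hPcov : μ (⋃ A ∈ P, A) = 1)
    (hP'meas : ∀ A ∈ P', MeasurableSet A)
    (hP'disj : ∀ A ∈ P', ∀ B ∈ P', A ≠ B → A ∩ B = ∅)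
    (hP'cov : μ (⋃ A ∈ P', A) = 1)
    (hN' : ∀ B ∈ P', (P.filter fun A => (A ∩ B).Nonempty).card ≤ N) :
    ∑ A ∈ P, Real.negMulLog (μ A).toReal ≤
      (∑ B ∈ P', Real.negMulLog (μ B).toReal) + Real.log N := by
  have hdec : ∀ A ∈ P, (μ A).toReal = ∑ B ∈ P', (μ (A ∩ B)).toReal := fun A hA =>
    measure_eq_sum_inter μ P' hP'meas hP'disj hP'cov A (hPmeas A hA)
  have hdec' : ∀ B ∈ P', (μ B).toReal = ∑ A ∈ P, (μ (A ∩ B)).toReal := by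
    intro B hB
    rw [measure_eq_sum_inter μ P hPmeas hPdisj hPcov B (hP'meas B hB)]
    exact Finset.sum_congr rfl fun A _ => by rw [Set.inter_comm]
  have hone : ∑ B ∈ P', (μ B).toReal = 1 := by
    have := measure_eq_sum_inter μ P' hP'meas hP'disj hP'cov Set.univ MeasurableSet.univ
    simpa using this.symm
  calc ∑ A ∈ P, Real.negMulLog (μ A).toReal
      ≤ ∑ A ∈ P, ∑ B ∈ P', Real.negMulLog (μ (A ∩ B)).toReal := by
        apply Finset.sum_le_sum
        intro A hA
        exact negMulLog_le_sum P' (fun B => (μ (A ∩ B)).toReal)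
          (fun B _ => ENNReal.toReal_nonneg) _ (hdec A hA)
    _ = ∑ B ∈ P', ∑ A ∈ P, Real.negMulLog (μ (A ∩ B)).toReal := Finset.sum_comm
    _ ≤ ∑ B ∈ P', (Real.negMulLog (μ B).toReal + (μ B).toReal * Real.log N) := by
        apply Finset.sum_le_sum
        intro B hB
        set T := P.filter fun A => (A ∩ B).Nonempty with hT
        have hzero : ∀ A ∈ P, A ∉ T → Real.negMulLog (μ (A ∩ B)).toReal = 0 := by
          intro A hA hAT
          have : ¬ (A ∩ B).Nonempty := fun h => hAT (Finset.mem_filter.2 ⟨hA, h⟩)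
          rw [Set.not_nonempty_iff_eq_empty] at this
          simp [this]
        have hzero' : ∀ A ∈ P, A ∉ T → (μ (A ∩ B)).toReal = 0 := by
          intro A hA hAT
          have : ¬ (A ∩ B).Nonempty := fun h => hAT (Finset.mem_filter.2 ⟨hA, h⟩)
          rw [Set.not_nonempty_iff_eq_empty] at this
          simp [this]
        have h1 : ∑ A ∈ P, Real.negMulLog (μ (A ∩ B)).toReal
            = ∑ A ∈ T, Real.negMulLog (μ (A ∩ B)).toReal :=
          (Finset.sum_subset (Finset.filter_subset _ _) hzero).symm
        have h2 : ∑ A ∈ T, (μ (A ∩ B)).toReal = (μ B).toReal := by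
          rw [hdec' B hB]
          exact Finset.sum_subset (Finset.filter_subset _ _) hzero'
        rw [h1]
        have := jensen_negMulLog T (fun A => (μ (A ∩ B)).toReal)
          (fun A _ => ENNReal.toReal_nonneg) N (hN' B hB)
        rwa [h2] at this
    _ = (∑ B ∈ P', Real.negMulLog (μ B).toReal) + Real.log N := by
        rw [Finset.sum_add_distrib, ← Finset.sum_mul, hone, one_mul]

open Classical in
/-- Let `μ` be a Borel probability measure on a metric space, and let
`F, F'` be finite measurable partitions (of a full-measure set) such that each element of
`F` intersects at most `N` elements of `F'` and vice versa. Then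
`|H(μ,F) − H(μ,F')| ≤ log₂ N` (here `G` is an auxiliary finite measurable partition). -/
theorem entropy_comparable_partitions (X : Type*) [MetricSpace X] [MeasurableSpace X]
    [BorelSpace X] (μ : Measure X) [IsProbabilityMeasure μ]
    (G F F' : Finset (Set X)) (N : ℕ)
    (hGmeas : ∀ A ∈ G, MeasurableSet A)
    (hGdisj : ∀ A ∈ G, ∀ B ∈ G, A ≠ B → A ∩ B = ∅)
    (hGcov : μ (⋃ A ∈ G, A) = 1)
    (hFmeas : ∀ A ∈ F, MeasurableSet A)
    (hFdisj : ∀ A ∈ F, ∀ B ∈ F, A ≠ B → A ∩ B = ∅)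
    (hFcov : μ (⋃ A ∈ F, A) = 1)
    (hF'meas : ∀ A ∈ F', MeasurableSet A)
    (hF'disj : ∀ A ∈ F', ∀ B ∈ F', A ≠ B → A ∩ B = ∅)
    (hF'cov : μ (⋃ A ∈ F', A) = 1)
    (hN : ∀ A ∈ F, (F'.filter fun B => (A ∩ B).Nonempty).card ≤ N)
    (hN' : ∀ B ∈ F', (F.filter fun A => (A ∩ B).Nonempty).card ≤ N) :
    |(∑ A ∈ F, -((μ A).toReal * Real.logb 2 (μ A).toReal)) -
        (∑ B ∈ F', -((μ B).toReal * Real.logb 2 (μ B).toReal))| ≤ Real.logb 2 N := by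
  have hNswap : ∀ B ∈ F, (F'.filter fun A => (A ∩ B).Nonempty).card ≤ N := by
    intro B hB
    have heq : (F'.filter fun A => (A ∩ B).Nonempty) = (F'.filter fun A => (B ∩ A).Nonempty) := by
      apply Finset.filter_congr
      intro A _
      simp [Set.inter_comm]
    rw [heq]
    exact hN B hB
  have key1 := entropy_le_entropy_add_log μ F F' N hFmeas hFdisj hFcov hF'meas hF'disj hF'cov hN'
  have key2 := entropy_le_entropy_add_log μ F' F N hF'meas hF'disj hF'cov hFmeas hFdisj hFcov hNswap
  have habs : |(∑ A ∈ F, Real.negMulLog (μ A).toReal) -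
      (∑ B ∈ F', Real.negMulLog (μ B).toReal)| ≤ Real.log N := by
    rw [abs_sub_le_iff]
    constructor <;> linarith
  have hconv : ∀ (s : Finset (Set X)),
      ∑ A ∈ s, -((μ A).toReal * Real.logb 2 (μ A).toReal)
        = (∑ A ∈ s, Real.negMulLog (μ A).toReal) / Real.log 2 := by
    intro s
    rw [Finset.sum_div]
    refine Finset.sum_congr rfl fun A _ => ?_
    rw [Real.logb, Real.negMulLog]
    ring
  rw [hconv, hconv, Real.logb, div_sub_div_same]
  rw [abs_div, abs_of_pos (Real.log_pos one_lt_two)]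
  exact div_le_div_of_nonneg_right habs (Real.log_pos one_lt_two).le
end
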